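/- arXiv:2601.00403 — 11 statements merged into one kernel-verified Lean document; each statement's English description precedes it below -/
import Mathlib

section
/- Let H be a complex Hilbert space, let G ⊆ H be nonempty, and let Θ ⊆ 𝕋 have exactly two elements. Then G does Θ-PR in H if and only if G has the complement property, i.e., for every subset S ⊆ G, either S is complete in H or G \ S is complete in H. -/
/-! For `Θ = {θ₁, θ₂}` a pair `f, h` with `⟨f, g⟩ ∈ Θ ⟨h, g⟩` for every `g ∈ G` splits `G` into
`S = {g | f - θ₁ h ⊥ g}` and `G \ S ⊆ {g | f - θ₂ h ⊥ g}`; completeness of one side forces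
`f = θ₁ h` or `f = θ₂ h`. Conversely, if neither `S` nor `G \ S` is complete, take nonzero
`u ⊥ S` and `v ⊥ G \ S`: then `f = θ₁ u + θ₂ v` and `h = u + v` are related by a phase from `Θ`
at every `g ∈ G`, but `f = θ h` would force `u = 0` or `v = 0`. -/

open MeasureTheory Set

noncomputable section

/-- The unit circle in the complex plane. -/
def unitCircle : Set ℂ := {z : ℂ | ‖z‖ = 1}

/-- `G` does `Θ`-PR in `H`.  The paper inner product `⟨f,g⟩` (linear in the first argument)
corresponds to Mathlib's `inner g f` (which is linear in the second argument). -/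
def DoesPR {H : Type*} [NormedAddCommGroup H] [InnerProductSpace ℂ H]
    (G : Set H) (Θ : Set ℂ) : Prop :=
  ∀ f h : H, (∀ g ∈ G, ∃ θ ∈ Θ, (inner ℂ g f : ℂ) = θ * (inner ℂ g h : ℂ)) →
    ∃ θ ∈ Θ, f = θ • h

/-- A set `S` is complete in `H` if the closure of its linear span is all of `H`. -/
def IsCompleteSystem {H : Type*} [NormedAddCommGroup H] [InnerProductSpace ℂ H]
    (S : Set H) : Prop :=
  (Submodule.span ℂ S).topologicalClosure = ⊤

section

open Submodule

variable {H : Type*} [NormedAddCommGroup H] [InnerProductSpace ℂ H]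

def HasComplementProperty (G : Set H) : Prop :=
  ∀ S ⊆ G, IsCompleteSystem S ∨ IsCompleteSystem (G \ S)

theorem mem_orthogonal_span_iff {S : Set H} {u : H} :
    u ∈ (span ℂ S)ᗮ ↔ ∀ g ∈ S, inner ℂ g u = 0 := by
  rw [← span_singleton_le_iff_mem, ← isOrtho_iff_le, isOrtho_comm, isOrtho_span]
  simp

theorem IsCompleteSystem.eq_zero_of_forall_inner_eq_zero {S : Set H} (hS : IsCompleteSystem S)
    {u : H} (hu : ∀ g ∈ S, inner ℂ g u = 0) : u = 0 := by
  have hmem : u ∈ (span ℂ S)ᗮ := mem_orthogonal_span_iff.mpr hu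
  rwa [← orthogonal_closure, hS, top_orthogonal_eq_bot, mem_bot] at hmem

theorem exists_ne_zero_forall_inner_eq_zero_of_not_isCompleteSystem [CompleteSpace H]
    {S : Set H} (hS : ¬ IsCompleteSystem S) : ∃ u : H, u ≠ 0 ∧ ∀ g ∈ S, inner ℂ g u = 0 := by
  rw [IsCompleteSystem, topologicalClosure_eq_top_iff] at hS
  obtain ⟨u, hu, hu0⟩ := exists_mem_ne_zero_of_ne_bot hS
  exact ⟨u, hu0, mem_orthogonal_span_iff.mp hu⟩

theorem doesPR_pair_of_hasComplementProperty {G : Set H} (hG : HasComplementProperty G)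
    (θ₁ θ₂ : ℂ) : DoesPR G {θ₁, θ₂} := by
  intro f h hfh
  let S : Set H := {g ∈ G | inner ℂ g (f - θ₁ • h) = 0}
  have inner_sub_smul {g : H} {θ : ℂ} (hθ : inner ℂ g f = θ * inner ℂ g h) :
      inner ℂ g (f - θ • h) = 0 := by
    rw [inner_sub_right, inner_smul_right, hθ, sub_self]
  rcases hG S (fun g hg => hg.1) with hS | hGS
  · exact ⟨θ₁, by simp, sub_eq_zero.mp (hS.eq_zero_of_forall_inner_eq_zero fun g hg => hg.2)⟩
  · refine ⟨θ₂, by simp, sub_eq_zero.mp (hGS.eq_zero_of_forall_inner_eq_zero ?_)⟩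
    rintro g ⟨hgG, hgS⟩
    obtain ⟨θ, rfl | rfl, hθ⟩ := hfh g hgG
    · exact absurd ⟨hgG, inner_sub_smul hθ⟩ hgS
    · exact inner_sub_smul hθ

theorem DoesPR.hasComplementProperty_of_pair [CompleteSpace H] {G : Set H} {θ₁ θ₂ : ℂ}
    (hne : θ₁ ≠ θ₂) (hPR : DoesPR G {θ₁, θ₂}) : HasComplementProperty G := by
  intro S _
  by_contra! hcon
  obtain ⟨u, hu0, hu⟩ := exists_ne_zero_forall_inner_eq_zero_of_not_isCompleteSystem hcon.1
  obtain ⟨v, hv0, hv⟩ := exists_ne_zero_forall_inner_eq_zero_of_not_isCompleteSystem hcon.2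
  have hphase : ∀ g ∈ G, ∃ θ ∈ ({θ₁, θ₂} : Set ℂ),
      inner ℂ g (θ₁ • u + θ₂ • v) = θ * inner ℂ g (u + v) := by
    intro g hg
    by_cases hgS : g ∈ S
    · exact ⟨θ₂, by simp, by simp [hu g hgS]⟩
    · exact ⟨θ₁, by simp, by simp [hv g ⟨hg, hgS⟩]⟩
  obtain ⟨θ, rfl | rfl, heq⟩ := hPR _ _ hphase
  · have hz : (θ₂ - θ) • v = 0 := by linear_combination (norm := module) heq
    exact hv0 ((smul_eq_zero.mp hz).resolve_left (sub_ne_zero.mpr hne.symm))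
  · have hz : (θ₁ - θ) • u = 0 := by linear_combination (norm := module) heq
    exact hu0 ((smul_eq_zero.mp hz).resolve_left (sub_ne_zero.mpr hne))

end

theorem stmt0_general {H : Type*} [NormedAddCommGroup H] [InnerProductSpace ℂ H] [CompleteSpace H]
    (G : Set H)
    (Θ : Set ℂ) (hcard : ∃ θ₁ θ₂ : ℂ, θ₁ ≠ θ₂ ∧ Θ = {θ₁, θ₂}) :
    DoesPR G Θ ↔ ∀ S ⊆ G, IsCompleteSystem S ∨ IsCompleteSystem (G \ S) := by
  obtain ⟨θ₁, θ₂, hne, rfl⟩ := hcard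
  exact ⟨DoesPR.hasComplementProperty_of_pair hne,
    fun hG => doesPR_pair_of_hasComplementProperty hG θ₁ θ₂⟩

theorem stmt0 {H : Type*} [NormedAddCommGroup H] [InnerProductSpace ℂ H] [CompleteSpace H]
    (G : Set H) (hG : G.Nonempty)
    (Θ : Set ℂ) (hΘ : Θ ⊆ unitCircle) (hcard : ∃ θ₁ θ₂ : ℂ, θ₁ ≠ θ₂ ∧ Θ = {θ₁, θ₂}) :
    DoesPR G Θ ↔ ∀ S ⊆ G, IsCompleteSystem S ∨ IsCompleteSystem (G \ S) :=
  stmt0_general G Θ hcard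
end
end

section
/- Let H be a complex Hilbert space, let G ⊆ H be nonempty, and let Θ ⊆ 𝕋 be nonempty. Then the following are equivalent: (1) G does Θ-PR; (2) there exists a Möbius transform M ∈ Aut(𝕋) such that G does M(Θ)-PR; (3) for every Möbius transform M ∈ Aut(𝕋), G does M(Θ)-PR. -/
open MeasureTheory Set

noncomputable section

/-- `M` is (the restriction to the unit circle of) a Möbius transform mapping the unit
circle bijectively onto itself. -/
def IsMobiusAutOfCircle (M : ℂ → ℂ) : Prop :=
  (∃ a b c d : ℂ, a * d - b * c ≠ 0 ∧
    ∀ z ∈ unitCircle, c * z + d ≠ 0 ∧ M z = (a * z + b) / (c * z + d)) ∧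
  Set.BijOn M unitCircle unitCircle

/-!
If `M θ = (aθ + b)/(cθ + d)`, then `⟨f, g⟩ = M(θ) ⟨h, g⟩` implies
`⟨d f - b h, g⟩ = θ ⟨a h - c f, g⟩`, and `d f - b h = θ (a h - c f)` implies `f = M(θ) h`.
So Θ-PR for the pair `(d f - b h, a h - c f)` gives `M(Θ)`-PR for `(f, h)`. Applying this to
the inverse Möbius map `w ↦ (d w - b)/(-c w + a)` gives the converse.
-/

section Mobius

variable {a b c d z : ℂ}

lemma mobius_inv_denom_ne_zero (hdet : a * d - b * c ≠ 0) (hz : c * z + d ≠ 0) :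
    -c * ((a * z + b) / (c * z + d)) + a ≠ 0 := by
  have : -c * ((a * z + b) / (c * z + d)) + a = (a * d - b * c) / (c * z + d) := by
    field_simp; ring
  rw [this]
  exact div_ne_zero hdet hz

lemma mobius_inv_apply (hdet : a * d - b * c ≠ 0) (hz : c * z + d ≠ 0) :
    (d * ((a * z + b) / (c * z + d)) + -b) / (-c * ((a * z + b) / (c * z + d)) + a) = z := by
  rw [div_eq_iff (mobius_inv_denom_ne_zero hdet hz)]
  linear_combination div_mul_cancel₀ (a * z + b) hz

end Mobius

section PhaseRetrieval

variable {H : Type*} [NormedAddCommGroup H] [InnerProductSpace ℂ H] {G : Set H} {Θ : Set ℂ}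

theorem DoesPR.image_of_eqOn_mobius {M : ℂ → ℂ} {a b c d : ℂ}
    (hM : ∀ z ∈ Θ, c * z + d ≠ 0 ∧ M z = (a * z + b) / (c * z + d)) (hPR : DoesPR G Θ) :
    DoesPR G (M '' Θ) := by
  intro f h hfh
  have hpair : ∀ g ∈ G, ∃ θ ∈ Θ,
      inner ℂ g (d • f - b • h) = θ * inner ℂ g (a • h - c • f) := by
    intro g hg
    obtain ⟨_, ⟨θ, hθ, rfl⟩, hg⟩ := hfh g hg
    obtain ⟨hden, hMθ⟩ := hM θ hθ
    have hcross : M θ * (c * θ + d) = a * θ + b := by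
      rw [hMθ]; exact div_mul_cancel₀ _ hden
    refine ⟨θ, hθ, ?_⟩
    simp only [inner_sub_right, inner_smul_right, hg]
    linear_combination (inner ℂ g h) * hcross
  obtain ⟨θ, hθ, hθpair⟩ := hPR _ _ hpair
  obtain ⟨hden, hMθ⟩ := hM θ hθ
  refine ⟨M θ, mem_image_of_mem M hθ, ?_⟩
  have hcross : (c * θ + d) • f = (a * θ + b) • h := by
    linear_combination (norm := module) hθpair
  rw [hMθ, div_eq_inv_mul, mul_smul, ← hcross, inv_smul_smul₀ hden]

theorem doesPR_image_iff_of_eqOn_mobius {M : ℂ → ℂ} {a b c d : ℂ} (hdet : a * d - b * c ≠ 0)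
    (hM : ∀ z ∈ Θ, c * z + d ≠ 0 ∧ M z = (a * z + b) / (c * z + d)) :
    DoesPR G (M '' Θ) ↔ DoesPR G Θ := by
  refine ⟨fun hPR => ?_, DoesPR.image_of_eqOn_mobius hM⟩
  let N : ℂ → ℂ := fun w => (d * w + -b) / (-c * w + a)
  have hNM : ∀ z ∈ Θ, N (M z) = z := fun z hz => by
    simp only [N, (hM z hz).2, mobius_inv_apply hdet (hM z hz).1]
  have hN : ∀ w ∈ M '' Θ, -c * w + a ≠ 0 ∧ N w = (d * w + -b) / (-c * w + a) := by
    rintro _ ⟨z, hz, rfl⟩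
    rw [(hM z hz).2]
    exact ⟨mobius_inv_denom_ne_zero hdet (hM z hz).1, rfl⟩
  have hNMΘ : N '' (M '' Θ) = Θ := by
    rw [image_image, image_congr hNM, image_id']
  simpa only [hNMΘ] using hPR.image_of_eqOn_mobius hN

theorem IsMobiusAutOfCircle.doesPR_image_iff {M : ℂ → ℂ} (hM : IsMobiusAutOfCircle M)
    (hΘ : Θ ⊆ unitCircle) : DoesPR G (M '' Θ) ↔ DoesPR G Θ := by
  obtain ⟨⟨a, b, c, d, hdet, hform⟩, -⟩ := hM
  exact doesPR_image_iff_of_eqOn_mobius hdet fun z hz => hform z (hΘ hz)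

end PhaseRetrieval

lemma isMobiusAutOfCircle_id : IsMobiusAutOfCircle id :=
  ⟨⟨1, 0, 0, 1, by norm_num, fun z _ => by simp⟩, bijOn_id _⟩

theorem stmt5_general {H : Type*} [NormedAddCommGroup H] [InnerProductSpace ℂ H]
    (G : Set H) (Θ : Set ℂ) (hΘ : Θ ⊆ unitCircle) :
    (DoesPR G Θ ↔ ∃ M : ℂ → ℂ, IsMobiusAutOfCircle M ∧ DoesPR G (M '' Θ)) ∧
    (DoesPR G Θ ↔ ∀ M : ℂ → ℂ, IsMobiusAutOfCircle M → DoesPR G (M '' Θ)) := by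
  have hid : DoesPR G (id '' Θ) ↔ DoesPR G Θ := by rw [image_id]
  refine ⟨⟨fun hPR => ⟨id, isMobiusAutOfCircle_id, hid.2 hPR⟩, ?_⟩, ⟨?_, ?_⟩⟩
  · rintro ⟨M, hM, hPR⟩
    exact (hM.doesPR_image_iff hΘ).1 hPR
  · exact fun hPR M hM => (hM.doesPR_image_iff hΘ).2 hPR
  · exact fun hall => hid.1 (hall id isMobiusAutOfCircle_id)

theorem stmt5 {H : Type*} [NormedAddCommGroup H] [InnerProductSpace ℂ H] [CompleteSpace H]
    (G : Set H) (hG : G.Nonempty) (Θ : Set ℂ) (hΘ : Θ ⊆ unitCircle) (hne : Θ.Nonempty) :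
    (DoesPR G Θ ↔ ∃ M : ℂ → ℂ, IsMobiusAutOfCircle M ∧ DoesPR G (M '' Θ)) ∧
    (DoesPR G Θ ↔ ∀ M : ℂ → ℂ, IsMobiusAutOfCircle M → DoesPR G (M '' Θ)) :=
  stmt5_general G Θ hΘ
end
end

section
/- Let d ≥ 2 and let G = {g_1, …, g_m} ⊆ ℂ^d be a system of m vectors. (1) If m ≤ 2d − 2, then G fails Θ-PR in ℂ^d for every Θ ⊆ 𝕋 with at least 2 elements. (2) If m = 2d − 1, then G fails Θ-PR in ℂ^d for every Θ ⊆ 𝕋 with at least 3 elements. -/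
open MeasureTheory Set

noncomputable section

/-!
A pair `f, h` with `f ≠ θ • h` for all `θ ∈ Θ`, such that every `g` is orthogonal to `f - θ_g • h`
for some `θ_g ∈ Θ`, witnesses the failure of `Θ`-PR. Given `θ₁ ≠ θ₂`, the vectors `f - θ • h` can be
made to run along the line through any two independent `v₁` (at `θ₁`) and `v₂` (at `θ₂`); at a third
`θ₃` they pass through a combination `a • v₁ + b • v₂` with `a, b ≠ 0`. So it suffices to find
independent `v₁, v₂` such that every `g_i` is orthogonal to `v₁` or to `v₂` (for `m ≤ 2d - 2`), or
else to `a • v₁ + b • v₂` (for `m = 2d - 1`).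

For `m ≤ 2d - 2`, split the vectors into two sets of at most `d - 1`. Their orthogonal complements
are nonzero, and when the `g_i` span `ℂ^d` they meet only in `0`, so nonzero vectors taken from them
are independent; when the `g_i` do not span, take `v₁` orthogonal to all of them. For `m = 2d - 1`,
treat all vectors but one, `x`, in this way, and rescale `v₁, v₂` so that `x ⊥ a • v₁ + b • v₂`.
-/

open Module Submodule Finset InnerProductSpace

section Covering

variable {𝕜 E : Type*} [RCLike 𝕜] [NormedAddCommGroup E] [InnerProductSpace 𝕜 E]

lemma linearIndependent_pair_of_disjoint {U W : Submodule 𝕜 E} (hUW : Disjoint U W)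
    {u w : E} (hu : u ∈ U) (hw : w ∈ W) (hu0 : u ≠ 0) (hw0 : w ≠ 0) :
    LinearIndependent 𝕜 ![u, w] := by
  rw [LinearIndependent.pair_iff' hu0]
  rintro a rfl
  exact hw0 (hUW.le_bot ⟨U.smul_mem a hu, hw⟩)

lemma orthogonal_span_ne_bot {s : Finset E} (hs : #s < finrank 𝕜 E) :
    (span 𝕜 (s : Set E))ᗮ ≠ ⊥ := by
  rw [Ne, orthogonal_eq_bot_iff]
  intro htop
  have : finrank 𝕜 (span 𝕜 (s : Set E)) ≤ #s := finrank_span_finset_le_card s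
  rw [htop, finrank_top] at this
  omega

lemma exists_linearIndependent_forall_inner_eq_zero_or (hd : 2 ≤ finrank 𝕜 E) {G : Finset E}
    (hG : #G ≤ 2 * finrank 𝕜 E - 2) :
    ∃ v₁ v₂ : E, LinearIndependent 𝕜 ![v₁, v₂] ∧
      ∀ x ∈ G, ⟪x, v₁⟫_𝕜 = 0 ∨ ⟪x, v₂⟫_𝕜 = 0 := by
  classical
  by_cases hspan : span 𝕜 (G : Set E) = ⊤
  · obtain ⟨A, hAG, hA⟩ := exists_subset_card_eq (min_le_right (finrank 𝕜 E - 1) #G)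
    obtain ⟨v₁, hv₁, hv₁0⟩ := exists_mem_ne_zero_of_ne_bot
      (orthogonal_span_ne_bot (𝕜 := 𝕜) (s := A) (by omega))
    obtain ⟨v₂, hv₂, hv₂0⟩ := exists_mem_ne_zero_of_ne_bot
      (orthogonal_span_ne_bot (𝕜 := 𝕜) (s := G \ A) (by rw [card_sdiff_of_subset hAG]; omega))
    have hdisj : Disjoint (span 𝕜 (A : Set E))ᗮ (span 𝕜 ((G \ A : Finset E) : Set E))ᗮ := by
      rw [disjoint_iff, inf_orthogonal, ← span_union, ← coe_union, union_sdiff_of_subset hAG,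
        hspan, top_orthogonal_eq_bot]
    refine ⟨v₁, v₂, linearIndependent_pair_of_disjoint hdisj hv₁ hv₂ hv₁0 hv₂0, fun x hx => ?_⟩
    by_cases hxA : x ∈ A
    · exact Or.inl (inner_right_of_mem_orthogonal (subset_span hxA) hv₁)
    · exact Or.inr (inner_right_of_mem_orthogonal (subset_span (mem_sdiff.2 ⟨hx, hxA⟩)) hv₂)
  · obtain ⟨v₁, hv₁, hv₁0⟩ := exists_mem_ne_zero_of_ne_bot (mt orthogonal_eq_bot_iff.1 hspan)
    obtain ⟨v₂, hv₂, hv₂0⟩ := exists_mem_ne_zero_of_ne_bot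
      (orthogonal_span_ne_bot (𝕜 := 𝕜) (s := {v₁}) (by rw [Finset.card_singleton]; omega))
    refine ⟨v₁, v₂, linearIndependent_pair_of_disjoint (orthogonal_disjoint _)
      (subset_span (mem_singleton_self v₁)) hv₂ hv₁0 hv₂0, fun x hx => ?_⟩
    exact Or.inl (inner_right_of_mem_orthogonal (subset_span hx) hv₁)

lemma exists_linearIndependent_forall_inner_eq_zero_or_or (hd : 2 ≤ finrank 𝕜 E) {G : Finset E}
    (hG : #G ≤ 2 * finrank 𝕜 E - 1) {a b : 𝕜} (ha : a ≠ 0) (hb : b ≠ 0) :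
    ∃ v₁ v₂ : E, LinearIndependent 𝕜 ![v₁, v₂] ∧
      ∀ x ∈ G, ⟪x, v₁⟫_𝕜 = 0 ∨ ⟪x, v₂⟫_𝕜 = 0 ∨ ⟪x, a • v₁ + b • v₂⟫_𝕜 = 0 := by
  classical
  obtain ⟨x, hcard⟩ : ∃ x, #(G.erase x) ≤ 2 * finrank 𝕜 E - 2 := by
    rcases G.eq_empty_or_nonempty with rfl | ⟨x, hx⟩
    · exact ⟨0, by simp⟩
    · exact ⟨x, by rw [card_erase_of_mem hx]; omega⟩
  obtain ⟨w₁, w₂, hw, hcover⟩ := exists_linearIndependent_forall_inner_eq_zero_or hd hcard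
  by_cases hxw : ⟪x, w₁⟫_𝕜 = 0 ∨ ⟪x, w₂⟫_𝕜 = 0
  · refine ⟨w₁, w₂, hw, fun y hy => ?_⟩
    by_cases hyx : y = x
    · subst hyx
      exact hxw.imp_right Or.inl
    · exact (hcover y (mem_erase.2 ⟨hyx, hy⟩)).imp_right Or.inl
  · push Not at hxw
    refine ⟨(b * ⟪x, w₂⟫_𝕜) • w₁, (-(a * ⟪x, w₁⟫_𝕜)) • w₂, ?_, fun y hy => ?_⟩
    · exact (LinearIndependent.pair_smul_smul_iff (mul_ne_zero hb hxw.2).isUnit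
        (neg_ne_zero.2 (mul_ne_zero ha hxw.1)).isUnit).2 hw
    · by_cases hyx : y = x
      · subst hyx
        refine Or.inr (Or.inr ?_)
        simp only [inner_add_right, inner_smul_right]
        ring
      · simp only [inner_smul_right, mul_eq_zero]
        rcases hcover y (mem_erase.2 ⟨hyx, hy⟩) with h | h
        · exact Or.inl (Or.inr h)
        · exact Or.inr (Or.inl (Or.inr h))

end Covering

section PhaseRetrieval

variable {H : Type*} [NormedAddCommGroup H] [InnerProductSpace ℂ H]

lemma not_doesPR_of_forall_inner_sub_smul_eq_zero {G : Set H} {Θ : Set ℂ} {f h : H}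
    (hfh : ∀ θ ∈ Θ, f ≠ θ • h) (hG : ∀ g ∈ G, ∃ θ ∈ Θ, ⟪g, f - θ • h⟫_ℂ = 0) :
    ¬ DoesPR G Θ := by
  intro hPR
  obtain ⟨θ, hθ, hf⟩ := hPR f h fun g hg => by
    obtain ⟨θ, hθ, hg⟩ := hG g hg
    exact ⟨θ, hθ, by rwa [inner_sub_right, inner_smul_right, sub_eq_zero] at hg⟩
  exact hfh θ hθ hf

lemma exists_forall_sub_smul_eq {θ₁ θ₂ : ℂ} (hθ : θ₁ ≠ θ₂) (v₁ v₂ : H) :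
    ∃ f h : H, ∀ θ : ℂ,
      f - θ • h = ((θ₂ - θ) / (θ₂ - θ₁)) • v₁ + ((θ - θ₁) / (θ₂ - θ₁)) • v₂ := by
  have hθ' : θ₂ - θ₁ ≠ 0 := sub_ne_zero.2 hθ.symm
  refine ⟨v₁ + (θ₁ / (θ₂ - θ₁)) • (v₁ - v₂), (θ₂ - θ₁)⁻¹ • (v₁ - v₂), fun θ => ?_⟩
  match_scalars <;> field_simp <;> ring

lemma not_doesPR_of_linearIndependent {G : Set H} {Θ : Set ℂ} {θ₁ θ₂ : ℂ} (hθ : θ₁ ≠ θ₂)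
    {v₁ v₂ : H} (hv : LinearIndependent ℂ ![v₁, v₂])
    (hG : ∀ g ∈ G, ∃ θ ∈ Θ,
      ⟪g, ((θ₂ - θ) / (θ₂ - θ₁)) • v₁ + ((θ - θ₁) / (θ₂ - θ₁)) • v₂⟫_ℂ = 0) :
    ¬ DoesPR G Θ := by
  obtain ⟨f, h, hfh⟩ := exists_forall_sub_smul_eq hθ v₁ v₂
  refine not_doesPR_of_forall_inner_sub_smul_eq_zero (f := f) (h := h) (fun θ _ hf => ?_)
    (by simpa only [hfh])
  have hzero := hfh θ
  rw [hf, sub_self, eq_comm] at hzero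
  obtain ⟨hc₁, hc₂⟩ := LinearIndependent.pair_iff.1 hv _ _ hzero
  have hθ' : θ₂ - θ₁ ≠ 0 := sub_ne_zero.2 hθ.symm
  have hsum : (θ₂ - θ) / (θ₂ - θ₁) + (θ - θ₁) / (θ₂ - θ₁) = 1 := by field_simp; ring
  simp [hc₁, hc₂] at hsum

end PhaseRetrieval

theorem stmt6 (d m : ℕ) (hd : 2 ≤ d) (g : Fin m → EuclideanSpace ℂ (Fin d)) :
    (m ≤ 2 * d - 2 →
      ∀ Θ : Set ℂ, Θ ⊆ unitCircle → (∃ θ₁ ∈ Θ, ∃ θ₂ ∈ Θ, θ₁ ≠ θ₂) →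
        ¬ DoesPR (Set.range g) Θ) ∧
    (m = 2 * d - 1 →
      ∀ Θ : Set ℂ, Θ ⊆ unitCircle →
        (∃ θ₁ ∈ Θ, ∃ θ₂ ∈ Θ, ∃ θ₃ ∈ Θ, θ₁ ≠ θ₂ ∧ θ₁ ≠ θ₃ ∧ θ₂ ≠ θ₃) →
        ¬ DoesPR (Set.range g) Θ) := by
  classical
  set G := Finset.univ.image g
  have hG : #G ≤ m := card_image_le.trans (by simp)
  have hdim : finrank ℂ (EuclideanSpace ℂ (Fin d)) = d := finrank_euclideanSpace_fin
  rw [show Set.range g = G by simp [G]]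
  constructor
  · rintro hm Θ - ⟨θ₁, hθ₁, θ₂, hθ₂, hθ⟩
    have hθ' : θ₂ - θ₁ ≠ 0 := sub_ne_zero.2 hθ.symm
    obtain ⟨v₁, v₂, hv, hcover⟩ :=
      exists_linearIndependent_forall_inner_eq_zero_or (𝕜 := ℂ) (G := G) (by omega) (by omega)
    refine not_doesPR_of_linearIndependent hθ hv fun x hx => ?_
    rcases hcover x hx with h | h
    · exact ⟨θ₁, hθ₁, by simpa [div_self hθ'] using h⟩
    · exact ⟨θ₂, hθ₂, by simpa [div_self hθ'] using h⟩
  · rintro hm Θ - ⟨θ₁, hθ₁, θ₂, hθ₂, θ₃, hθ₃, h₁₂, h₁₃, h₂₃⟩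
    have hθ' : θ₂ - θ₁ ≠ 0 := sub_ne_zero.2 h₁₂.symm
    obtain ⟨v₁, v₂, hv, hcover⟩ :=
      exists_linearIndependent_forall_inner_eq_zero_or_or (𝕜 := ℂ) (G := G) (by omega) (by omega)
        (div_ne_zero (sub_ne_zero.2 h₂₃) hθ') (div_ne_zero (sub_ne_zero.2 h₁₃.symm) hθ')
    refine not_doesPR_of_linearIndependent h₁₂ hv fun x hx => ?_
    rcases hcover x hx with h | h | h
    · exact ⟨θ₁, hθ₁, by simpa [div_self hθ'] using h⟩
    · exact ⟨θ₂, hθ₂, by simpa [div_self hθ'] using h⟩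
    · exact ⟨θ₃, hθ₃, h⟩
end
end

section
/- Let d ≥ 2, let m ≥ 2d, and let Θ ⊆ 𝕋 be finite and nonempty. Then there exists a nonzero polynomial p in the d·m complex entries of a matrix F = (g_1, …, g_m) ∈ ℂ^{d×m} (with columns g_j ∈ ℂ^d) such that for every F ∈ ℂ^{d×m} with p(F) ≠ 0, the set {g_1, …, g_m} does Θ-PR in ℂ^d. In particular, the collection of systems of m vectors doing Θ-PR in ℂ^d contains a nonempty Zariski-open subset of ℂ^{d×m}. -/
open MeasureTheory Set

noncomputable section

/-- The `j`-th column of a `d × m` complex matrix, as a vector in `ℂ^d`. -/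
def column (d m : ℕ) (F : Matrix (Fin d) (Fin m) ℂ) (j : Fin m) :
    EuclideanSpace ℂ (Fin d) :=
  WithLp.toLp 2 (fun i => F i j)

/-!
Write the hypothesis as `⟨f, g_j⟩ = σ_j ⟨h, g_j⟩` with phases `σ_j ∈ Θ`. If some phase `θ` is
taken by more than `m - d` columns, then `f - θ h` is orthogonal to `d` of them; these span `ℂ^d`
as soon as every `d × d` minor of `F` is nonzero, so `f = θ h`. Otherwise every phase is missed
by at least `d` columns, and pairing the `t`-th with the `(t + m - d)`-th column in phase order
gives `d` disjoint pairs with distinct phases. Conjugated, the `2d` equations of these pairs form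
a square linear system in `(f̄, h̄)` whose determinant is a polynomial in `F`; it is not
identically zero, as it specializes to `∏ (τ - τ')` over the pairs, so generically `f = h = 0`.
As `Θ` is finite, the product of all these minors and determinants is a single nonzero
polynomial.
-/

open Matrix Finset

theorem exists_embedding_apply_inl_ne_apply_inr {α : Type*} [DecidableEq α] {d m : ℕ}
    (hm : 2 * d ≤ m) (σ : Fin m → α) (hσ : ∀ j, d ≤ #{i | σ i ≠ σ j}) :
    ∃ es : Fin d ⊕ Fin d ↪ Fin m, ∀ t, σ (es (.inl t)) ≠ σ (es (.inr t)) := by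
  -- If the `t`-th and `(t + m - d)`-th values in sorted order agree, `m - d + 1` indices share it.
  let _ : LinearOrder α := IsWellOrder.linearOrder WellOrderingRel
  set π := Tuple.sort σ
  let a : Fin d → Fin m := fun t => ⟨t, by omega⟩
  let b : Fin d → Fin m := fun t => ⟨t + (m - d), by omega⟩
  have hab : Function.Injective (Sum.elim a b) :=
    Function.Injective.sumElim (fun s t h => Fin.ext (by simpa [a] using h))
      (fun s t h => Fin.ext (by simpa [b] using h))
      (fun s t h => by have := congrArg Fin.val h; simp [a, b] at this; omega)
  refine ⟨⟨π ∘ Sum.elim a b, π.injective.comp hab⟩, fun t hσt => ?_⟩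
  set c := σ (π (a t))
  have hsorted : Monotone (σ ∘ π) := Tuple.monotone_sort σ
  have hconst : ∀ s ∈ Finset.Icc (a t) (b t), σ (π s) = c := fun s hs =>
    le_antisymm ((hsorted (Finset.mem_Icc.1 hs).2).trans_eq hσt.symm)
      (hsorted (Finset.mem_Icc.1 hs).1)
  have hc : m - d + 1 ≤ #{i | σ i = c} :=
    calc m - d + 1 = #(Finset.Icc (a t) (b t)) := by simp [Fin.card_Icc, a, b]; omega
      _ = #((Finset.Icc (a t) (b t)).map π.toEmbedding) := (card_map _).symm
      _ ≤ #{i | σ i = c} := card_le_card fun i hi => by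
        obtain ⟨s, hs, rfl⟩ := mem_map.1 hi
        simpa using hconst s hs
  have hsplit := card_filter_add_card_filter_not (s := univ) (fun i => σ i = c)
  have hne : d ≤ #{i | ¬σ i = c} := hσ (π (a t))
  simp only [card_univ, Fintype.card_fin] at hsplit
  omega

section PhaseMatrix

variable {ι n R : Type*} [CommRing R]

def phaseMatrix (A : Matrix ι n R) (c : ι → R) : Matrix ι (n ⊕ n) R :=
  fromCols A (of fun i j => -(c i * A i j))

theorem phaseMatrix_mulVec_sumElim [Fintype n] (A : Matrix ι n R) (c : ι → R) (x y : n → R)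
    (i : ι) : (phaseMatrix A c *ᵥ Sum.elim x y) i = (A *ᵥ x) i - c i * (A *ᵥ y) i := by
  simp [phaseMatrix, mulVec, dotProduct, Finset.mul_sum, sub_eq_add_neg, mul_assoc]

theorem phaseMatrix_map {S : Type*} [CommRing S] (A : Matrix ι n R) (c : ι → R) (f : R →+* S) :
    (phaseMatrix A c).map f = phaseMatrix (A.map f) (f ∘ c) := by
  ext i (j | j) <;> simp [phaseMatrix]

theorem det_phaseMatrix_fromRows_one [Fintype n] [DecidableEq n] (c : n ⊕ n → R) :
    (phaseMatrix (fromRows (1 : Matrix n n R) 1) c).det = ∏ t, (c (.inl t) - c (.inr t)) := by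
  have hblocks : phaseMatrix (fromRows (1 : Matrix n n R) 1) c =
      fromBlocks 1 (-diagonal (c ∘ .inl)) 1 (-diagonal (c ∘ .inr)) := by
    ext (i | i) (j | j) <;> by_cases h : i = j <;> simp [phaseMatrix, one_apply, h]
  rw [hblocks, det_fromBlocks_one₁₁, one_mul, sub_neg_eq_add, neg_add_eq_sub, diagonal_sub,
    det_diagonal]
  rfl

end PhaseMatrix

theorem exists_transpose_submatrix_eq {ι m n R : Type*} [Zero R] {e : ι → m}
    (he : Function.Injective e) (B : Matrix ι n R) : ∃ A : Matrix n m R, Aᵀ.submatrix e id = B :=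
  ⟨(of (Function.extend e B 0))ᵀ, by ext i j; exact congrFun (he.extend_apply B 0 i) j⟩

namespace MvPolynomial

variable {σ R : Type*} [CommRing R]

theorem exists_ne_zero_forall_eval_ne_zero_imp [IsDomain R] {ι : Type*} [Finite ι]
    (P : ι → MvPolynomial σ R) (hP : ∀ i, P i ≠ 0) :
    ∃ p ≠ 0, ∀ x, eval x p ≠ 0 → ∀ i, eval x (P i) ≠ 0 := by
  have := Fintype.ofFinite ι
  refine ⟨∏ i, P i, prod_ne_zero_iff.2 fun i _ => hP i, fun x hx i => ?_⟩
  rw [map_prod] at hx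
  exact prod_ne_zero_iff.1 hx i (mem_univ i)

end MvPolynomial

section GenericMatrix

open MvPolynomial

variable {n m R : Type*} [CommRing R]

theorem mvPolynomialX_map_eval (F : Matrix n m R) :
    (mvPolynomialX n m R).map (eval fun q => F q.1 q.2) = F :=
  mvPolynomialX_map_eval₂ (RingHom.id R) F

variable [Fintype n] [DecidableEq n]

variable (R) in
def minorPoly (e : n → m) : MvPolynomial (n × m) R :=
  ((mvPolynomialX n m R)ᵀ.submatrix e id).det

theorem eval_minorPoly (e : n → m) (F : Matrix n m R) :
    eval (fun q => F q.1 q.2) (minorPoly R e) = (Fᵀ.submatrix e id).det := by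
  rw [minorPoly, RingHom.map_det, RingHom.mapMatrix_apply, ← submatrix_map, transpose_map,
    mvPolynomialX_map_eval]

theorem minorPoly_ne_zero [Nontrivial R] {e : n → m} (he : Function.Injective e) :
    minorPoly R e ≠ 0 := by
  obtain ⟨F, hF⟩ := exists_transpose_submatrix_eq he (1 : Matrix n n R)
  intro h
  simpa [eval_minorPoly, hF] using congrArg (eval fun q => F q.1 q.2) h

def phasePoly (es : n ⊕ n → m) (c : n ⊕ n → R) : MvPolynomial (n × m) R :=
  (phaseMatrix ((mvPolynomialX n m R)ᵀ.submatrix es id) (C ∘ c)).det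

theorem eval_phasePoly (es : n ⊕ n → m) (c : n ⊕ n → R) (F : Matrix n m R) :
    eval (fun q => F q.1 q.2) (phasePoly es c) = (phaseMatrix (Fᵀ.submatrix es id) c).det := by
  rw [phasePoly, RingHom.map_det, RingHom.mapMatrix_apply, phaseMatrix_map, ← submatrix_map,
    transpose_map, mvPolynomialX_map_eval]
  simp [Function.comp_def]

theorem phasePoly_ne_zero [IsDomain R] {es : n ⊕ n → m} (hes : Function.Injective es)
    {c : n ⊕ n → R} (hc : ∀ t, c (.inl t) ≠ c (.inr t)) : phasePoly es c ≠ 0 := by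
  obtain ⟨F, hF⟩ := exists_transpose_submatrix_eq hes (fromRows (1 : Matrix n n R) 1)
  intro h
  have h0 := congrArg (eval fun q => F q.1 q.2) h
  rw [eval_phasePoly, hF, det_phaseMatrix_fromRows_one, map_zero] at h0
  exact prod_ne_zero_iff.2 (fun t _ => sub_ne_zero.2 (hc t)) h0

end GenericMatrix

section PhaseRetrieval

variable {d m : ℕ} {F : Matrix (Fin d) (Fin m) ℂ}

theorem inner_column_eq_submatrix_mulVec {ι : Type*} (e : ι → Fin m)
    (v : EuclideanSpace ℂ (Fin d)) (t : ι) :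
    inner ℂ v (column d m F (e t)) = (Fᵀ.submatrix e id *ᵥ star v.ofLp) t := by
  rw [EuclideanSpace.inner_eq_star_dotProduct]
  rfl

theorem eq_zero_of_inner_column_eq_zero {e : Fin d → Fin m} (he : (Fᵀ.submatrix e id).det ≠ 0)
    {v : EuclideanSpace ℂ (Fin d)} (hv : ∀ t, inner ℂ (column d m F (e t)) v = 0) : v = 0 := by
  have hmul : Fᵀ.submatrix e id *ᵥ star v.ofLp = 0 := by
    ext t
    exact (inner_column_eq_submatrix_mulVec e v t).symm.trans (inner_eq_zero_symm.1 (hv t))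
  exact (WithLp.ofLp_eq_zero 2).1 (star_eq_zero.1 (eq_zero_of_mulVec_eq_zero he hmul))

theorem eq_smul_of_inner_column_eq_mul {e : Fin d → Fin m} (he : (Fᵀ.submatrix e id).det ≠ 0)
    {f h : EuclideanSpace ℂ (Fin d)} {θ : ℂ}
    (hfh : ∀ t, inner ℂ (column d m F (e t)) f = θ * inner ℂ (column d m F (e t)) h) :
    f = θ • h := by
  refine sub_eq_zero.1 (eq_zero_of_inner_column_eq_zero he fun t => ?_)
  rw [inner_sub_right, inner_smul_right, hfh, sub_self]

theorem eq_zero_of_inner_column_eq_mul {es : Fin d ⊕ Fin d → Fin m} {τ : Fin d ⊕ Fin d → ℂ}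
    (hdet : (phaseMatrix (Fᵀ.submatrix es id) fun r => star (τ r)).det ≠ 0)
    {f h : EuclideanSpace ℂ (Fin d)}
    (hfh : ∀ r, inner ℂ (column d m F (es r)) f = τ r * inner ℂ (column d m F (es r)) h) :
    f = 0 ∧ h = 0 := by
  -- Conjugating makes the equations linear in `(f̄, h̄)` with coefficients polynomial in `F`.
  have hmul : (phaseMatrix (Fᵀ.submatrix es id) fun r => star (τ r)) *ᵥ
      Sum.elim (star f.ofLp) (star h.ofLp) = 0 := by
    ext r
    rw [phaseMatrix_mulVec_sumElim, Pi.zero_apply, sub_eq_zero]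
    simpa [inner_conj_symm, inner_column_eq_submatrix_mulVec] using congrArg star (hfh r)
  have h0 := eq_zero_of_mulVec_eq_zero hdet hmul
  exact ⟨(WithLp.ofLp_eq_zero 2).1 (star_eq_zero.1 (funext fun i => congrFun h0 (.inl i))),
    (WithLp.ofLp_eq_zero 2).1 (star_eq_zero.1 (funext fun i => congrFun h0 (.inr i)))⟩

theorem doesPR_range_column (hm : 2 * d ≤ m) {Θ : Set ℂ} (hΘ : Θ.Nonempty)
    (hminor : ∀ e : Fin d ↪ Fin m, (Fᵀ.submatrix e id).det ≠ 0)
    (hphase : ∀ (es : Fin d ⊕ Fin d ↪ Fin m) (τ : Fin d ⊕ Fin d → ℂ), (∀ r, τ r ∈ Θ) →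
      (∀ t, τ (.inl t) ≠ τ (.inr t)) →
      (phaseMatrix (Fᵀ.submatrix es id) fun r => star (τ r)).det ≠ 0) :
    DoesPR (Set.range (column d m F)) Θ := by
  intro f h hfh
  choose σ hσΘ hσ using fun j => hfh _ (Set.mem_range_self j)
  by_cases hdom : ∃ j, #{i | σ i ≠ σ j} < d
  · obtain ⟨j, hj : #{i | ¬σ i = σ j} < d⟩ := hdom
    obtain ⟨e, he⟩ : ∃ e : Fin d ↪ Fin m, ∀ t, σ (e t) = σ j := by
      have hsplit := card_filter_add_card_filter_not (s := univ) (fun i => σ i = σ j)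
      simp only [card_univ, Fintype.card_fin] at hsplit
      obtain ⟨S, hS, hcard⟩ :=
        Finset.exists_subset_card_eq (s := {i | σ i = σ j}) (n := d) (by omega)
      exact ⟨(S.orderEmbOfFin hcard).toEmbedding,
        fun t => (mem_filter.1 (hS (S.orderEmbOfFin_mem hcard t))).2⟩
    exact ⟨σ j, hσΘ j, eq_smul_of_inner_column_eq_mul (hminor e) fun t => he t ▸ hσ (e t)⟩
  · push Not at hdom
    obtain ⟨es, hes⟩ := exists_embedding_apply_inl_ne_apply_inr hm σ hdom
    obtain ⟨rfl, rfl⟩ := eq_zero_of_inner_column_eq_mul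
      (hphase es (σ ∘ es) (fun r => hσΘ _) hes) fun r => hσ (es r)
    obtain ⟨θ, hθ⟩ := hΘ
    exact ⟨θ, hθ, (smul_zero θ).symm⟩

end PhaseRetrieval

theorem stmt7_general (d m : ℕ) (hm : 2 * d ≤ m)
    (Θ : Set ℂ) (hfin : Θ.Finite) (hne : Θ.Nonempty) :
    ∃ p : MvPolynomial (Fin d × Fin m) ℂ, p ≠ 0 ∧
      ∀ F : Matrix (Fin d) (Fin m) ℂ,
        MvPolynomial.eval (fun q => F q.1 q.2) p ≠ 0 →
        DoesPR (Set.range (column d m F)) Θ := by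
  have := hfin.to_subtype
  let PhaseData := {x : (Fin d ⊕ Fin d ↪ Fin m) × (Fin d ⊕ Fin d → Θ) //
    ∀ t, x.2 (.inl t) ≠ x.2 (.inr t)}
  obtain ⟨p, hp, hpF⟩ := MvPolynomial.exists_ne_zero_forall_eval_ne_zero_imp
    (Sum.elim (fun e : Fin d ↪ Fin m => minorPoly ℂ e)
      fun x : PhaseData => phasePoly x.1.1 fun r => star (x.1.2 r : ℂ)) (by
      rintro (e | ⟨⟨es, τ⟩, hτ⟩)
      · exact minorPoly_ne_zero e.injective
      · exact phasePoly_ne_zero es.injective fun t =>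
          star_injective.ne (Subtype.coe_injective.ne (hτ t)))
  refine ⟨p, hp, fun F hF => doesPR_range_column hm hne (fun e => ?_) fun es τ hτΘ hτ => ?_⟩
  · simpa [eval_minorPoly] using hpF _ hF (.inl e)
  · simpa [eval_phasePoly] using hpF _ hF
      (.inr ⟨⟨es, fun r => ⟨τ r, hτΘ r⟩⟩, fun t h => hτ t (congrArg Subtype.val h)⟩)

theorem stmt7 (d m : ℕ) (hd : 2 ≤ d) (hm : 2 * d ≤ m)
    (Θ : Set ℂ) (hΘ : Θ ⊆ unitCircle) (hfin : Θ.Finite) (hne : Θ.Nonempty) :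
    ∃ p : MvPolynomial (Fin d × Fin m) ℂ, p ≠ 0 ∧
      ∀ F : Matrix (Fin d) (Fin m) ℂ,
        MvPolynomial.eval (fun q => F q.1 q.2) p ≠ 0 →
        DoesPR (Set.range (column d m F)) Θ :=
  stmt7_general d m hm Θ hfin hne
end
end

section
/- Let d ≥ 2 and let Θ ⊆ 𝕋 be countable and nonempty. Define N(ℂ^d, Θ) as the minimum of all m ∈ ℕ for which there exists a set G ⊆ ℂ^d with exactly m elements that does Θ-PR in ℂ^d. Then N(ℂ^d, Θ) = d if |Θ| = 1, N(ℂ^d, Θ) = 2d − 1 if |Θ| = 2, and N(ℂ^d, Θ) = 2d if |Θ| ≥ 3. -/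
open MeasureTheory Set

noncomputable section

/-- The minimal number of vectors in `ℂ^d` doing `Θ`-PR. -/
def minPR (d : ℕ) (Θ : Set ℂ) : ℕ :=
  sInf {m : ℕ | ∃ G : Set (EuclideanSpace ℂ (Fin d)), G.Finite ∧ G.ncard = m ∧ DoesPR G Θ}

/-!
Fewer than `d` vectors leave a nonzero `u` orthogonal to all of them, and `(f, h) = (u, 0)` is a
counterexample. With two phases, `2d - 2` vectors split into two halves of `d - 1`, orthogonal to
nonzero vectors `u` and `v` respectively, and a combination of `u` and `v` is a counterexample;
with a third phase one more vector can be absorbed after rescaling `u` and `v`.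

Conversely, choose `w 0, w 1, …` one at a time, each avoiding countably many proper subspaces
(Baire; this is where countability of `Θ` enters), so that for every admissible assignment of
phases `θ_i` (each used at most `d` times, at most `2d` vectors) the pairs
`(w i, -conj θ_i • w i) ∈ ℂ^d × ℂ^d` are linearly independent. Given phases for `f, h`, either
some phase occurs `d` times, and then `d` independent `w i` force `f = θ • h`, or the `2d` pairs
form a basis of `ℂ^d × ℂ^d` annihilating `(f, h)`, so `f = h = 0`. For `|Θ| ≤ 2` the pigeonhole
principle already yields a phase occurring `d` times among `|Θ| (d - 1) + 1` vectors.
-/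

open Module Submodule
open scoped Finset InnerProductSpace ComplexConjugate

section SmulGraph

variable {K V : Type*} [Field K] [AddCommGroup V] [Module K V]

def smulGraph (c : K) : V →ₗ[K] V × V := LinearMap.id.prod (c • LinearMap.id)

@[simp]
theorem smulGraph_apply (c : K) (x : V) : smulGraph c x = (x, c • x) := rfl

theorem smulGraph_injective (c : K) : Function.Injective (smulGraph (V := V) c) :=
  fun _ _ h => congrArg Prod.fst h

theorem Submodule.finrank_add_finrank_map_le {M N : Type*} [AddCommGroup M] [Module K M]
    [FiniteDimensional K M] [AddCommGroup N] [Module K N] {U W : Submodule K M} (π : M →ₗ[K] N)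
    (hUW : U ≤ W) (hU : U ≤ LinearMap.ker π) :
    finrank K U + finrank K (W.map π) ≤ finrank K W := by
  have hrn := LinearMap.finrank_range_add_finrank_ker (π.domRestrict W)
  rw [LinearMap.range_domRestrict, LinearMap.ker_domRestrict] at hrn
  have : finrank K U ≤ finrank K ((LinearMap.ker π).comap W.subtype) := by
    rw [← (Submodule.comapSubtypeEquivOfLe hUW).finrank_eq]
    exact Submodule.finrank_mono (Submodule.comap_mono hU)
  omega

theorem LinearIndepOn.card_le_finrank {ι : Type*} {w : ι → V} {s : Finset ι}
    (hs : LinearIndepOn K w (s : Set ι)) {U : Submodule K V} [FiniteDimensional K U]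
    (hU : w '' s ⊆ U) : #s ≤ finrank K U := by
  have := finrank_span_eq_card hs
  simp only [Finset.coe_sort_coe, Fintype.card_coe] at this
  rw [← this]
  exact Submodule.finrank_mono (span_le.2 (Set.image_eq_range w s ▸ hU))

variable [DecidableEq K]

/-- `range (smulGraph a)` is the kernel of `(x, y) ↦ y - a • x`, which maps the span onto the
span of the `w i` with `c i ≠ a`; as any `dim V` of the `w i` are independent, counting
dimensions leaves no room for the kernel. -/
theorem range_smulGraph_not_le_span [FiniteDimensional K V] {ι : Type*} {t : Finset ι}
    {w : ι → V} {c : ι → K} {a : K}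
    (hw : ∀ s ⊆ t, #s ≤ finrank K V → LinearIndepOn K w (s : Set ι))
    (ht : #t < 2 * finrank K V) (hta : #{i ∈ t | c i = a} < finrank K V) :
    ¬ LinearMap.range (smulGraph (V := V) a) ≤
      span K ((fun i => smulGraph (c i) (w i)) '' t) := by
  classical
  intro hle
  set W := span K ((fun i => smulGraph (c i) (w i)) '' t) with hWdef
  let π : V × V →ₗ[K] V := LinearMap.snd K V V - a • LinearMap.fst K V V
  have hker : LinearMap.range (smulGraph (V := V) a) ≤ LinearMap.ker π := by
    rintro _ ⟨x, rfl⟩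
    simp [π]
  set J : Finset ι := {i ∈ t | c i ≠ a}
  have hJ : w '' J ⊆ W.map π := by
    rintro _ ⟨i, hi, rfl⟩
    rw [Finset.mem_coe, Finset.mem_filter] at hi
    have hπ : π (smulGraph (c i) (w i)) = (c i - a) • w i := by simp [π, sub_smul]
    have hmem : (c i - a) • w i ∈ W.map π :=
      hπ ▸ mem_map_of_mem (subset_span ⟨i, hi.1, rfl⟩)
    simpa [smul_smul, inv_mul_cancel₀ (sub_ne_zero.2 hi.2)] using
      (W.map π).smul_mem (c i - a)⁻¹ hmem
  obtain ⟨s, hs, hscard⟩ :=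
    Finset.exists_subset_card_eq (min_le_left #J (finrank K V))
  have hrank : #s ≤ finrank K (W.map π) :=
    (hw s (hs.trans (Finset.filter_subset _ _)) (hscard.trans_le (min_le_right _ _)))
      |>.card_le_finrank ((Set.image_mono (Finset.coe_subset.2 hs)).trans hJ)
  have hW : finrank K W ≤ #t := by
    rw [hWdef, ← Finset.coe_image]
    exact (finrank_span_finset_le_card _).trans Finset.card_image_le
  have hsplit : #{i ∈ t | c i = a} + #J = #t := Finset.card_filter_add_card_filter_not _
  have := finrank_add_finrank_map_le π hle hker
  rw [LinearMap.finrank_range_of_inj (smulGraph_injective a)] at this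
  omega

def IsPhaseGeneric (Λ : Set K) (m : ℕ) (w : ℕ → V) : Prop :=
  ∀ t ⊆ Finset.range m, ∀ c : ℕ → K, (∀ i ∈ t, c i ∈ Λ) → #t ≤ 2 * finrank K V →
    (∀ a, #{i ∈ t | c i = a} ≤ finrank K V) →
      LinearIndepOn K (fun i => smulGraph (c i) (w i)) (t : Set ℕ)

theorem isPhaseGeneric_zero (Λ : Set K) (w : ℕ → V) : IsPhaseGeneric Λ 0 w := by
  intro t ht
  rw [Finset.range_zero, Finset.subset_empty] at ht
  subst ht
  simp

theorem IsPhaseGeneric.linearIndepOn {Λ : Set K} {m : ℕ} {w : ℕ → V} (hw : IsPhaseGeneric Λ m w)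
    {a : K} (ha : a ∈ Λ) {s : Finset ℕ} (hs : s ⊆ Finset.range m) (hcard : #s ≤ finrank K V) :
    LinearIndepOn K w (s : Set ℕ) :=
  LinearIndepOn.of_comp (smulGraph a) <| hw s hs (fun _ => a) (fun _ _ => ha) (by omega)
    fun _ => (Finset.card_filter_le _ _).trans hcard

end SmulGraph

section Generic

variable {𝕜 V : Type*} [NontriviallyNormedField 𝕜] [CompleteSpace 𝕜] [NormedAddCommGroup V]
  [NormedSpace 𝕜 V] [FiniteDimensional 𝕜 V]

theorem exists_forall_notMem_of_ne_top {ι : Type*} [Countable ι] (p : ι → Submodule 𝕜 V) :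
    ∃ x : V, ∀ i, p i ≠ ⊤ → x ∉ p i := by
  by_contra! h
  have hcover : ⋃ i : {i // p i ≠ ⊤}, (p i : Set V) = Set.univ :=
    Set.eq_univ_of_forall fun x => by
      obtain ⟨i, hi, hx⟩ := h x
      exact Set.mem_iUnion.2 ⟨⟨i, hi⟩, hx⟩
  have : CompleteSpace V := FiniteDimensional.complete 𝕜 V
  obtain ⟨i, hi⟩ :=
    nonempty_interior_of_iUnion_of_closed
      (fun i : {i // p i ≠ ⊤} => (p i).closed_of_finiteDimensional) hcover
  exact i.2 ((p i).eq_top_of_nonempty_interior' hi)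

variable [DecidableEq 𝕜]

theorem IsPhaseGeneric.exists_update {Λ : Set 𝕜} (hΛ : Λ.Countable) {m : ℕ} {w : ℕ → V}
    (hw : IsPhaseGeneric Λ m w) : ∃ x, IsPhaseGeneric Λ (m + 1) (Function.update w m x) := by
  have : Countable Λ := hΛ.to_subtype
  -- one subspace for each set `t` of earlier indices, phases on `t`, and a phase for `w m`
  obtain ⟨x, hx⟩ := exists_forall_notMem_of_ne_top fun j : (Σ t : Finset ℕ, t → Λ) × Λ =>
    (span 𝕜 (Set.range fun i : j.1.1 => smulGraph (j.1.2 i : 𝕜) (w i))).comap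
      (smulGraph (j.2 : 𝕜))
  refine ⟨x, fun t ht c hc htd hfib => ?_⟩
  have hsub : t.erase m ⊆ Finset.range m := fun i hi => by
    have := Finset.mem_range.1 (ht (Finset.mem_of_mem_erase hi))
    have := Finset.ne_of_mem_erase hi
    exact Finset.mem_range.2 (by omega)
  have hagree : Set.EqOn (fun i => smulGraph (c i) (w i))
      (fun i => smulGraph (c i) (Function.update w m x i)) ↑(t.erase m) := fun i hi => by
    simp [Function.update_of_ne (Finset.ne_of_mem_erase hi)]
  have hli := (hw _ hsub c (fun i hi => hc i (Finset.mem_of_mem_erase hi))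
    ((Finset.card_erase_le).trans htd) fun a => (Finset.card_le_card
      (Finset.filter_subset_filter _ (Finset.erase_subset _ _))).trans (hfib a)).congr hagree
  by_cases hm : m ∈ t
  swap
  · rwa [Finset.erase_eq_of_notMem hm] at hli
  rw [← Finset.insert_erase hm, Finset.coe_insert, linearIndepOn_insert (by simp)]
  refine ⟨hli, ?_⟩
  rw [← Set.image_congr hagree, Function.update_self]
  have hproper := range_smulGraph_not_le_span (t := t.erase m) (w := w) (c := c) (a := c m)
    (fun s hs hcard => hw.linearIndepOn (hc m hm) (hs.trans hsub) hcard) ?_ ?_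
  · intro hmem
    rw [Set.image_eq_range] at hproper hmem
    exact hx ⟨⟨t.erase m, fun i => ⟨c i, hc i (Finset.mem_of_mem_erase i.2)⟩⟩, ⟨c m, hc m hm⟩⟩
      (by rwa [ne_eq, ← LinearMap.range_le_iff_comap]) hmem
  all_goals
    have hmc : m ∈ {i ∈ t | c i = c m} := Finset.mem_filter.2 ⟨hm, rfl⟩
    have := Finset.card_pos.2 ⟨m, hmc⟩
    have := hfib (c m)
  · rw [Finset.card_erase_of_mem hm]
    omega
  · rw [Finset.filter_erase, Finset.card_erase_of_mem hmc]
    omega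

theorem exists_isPhaseGeneric {Λ : Set 𝕜} (hΛ : Λ.Countable) :
    ∀ m, ∃ w : ℕ → V, IsPhaseGeneric Λ m w
  | 0 => ⟨0, isPhaseGeneric_zero Λ 0⟩
  | m + 1 =>
    have ⟨_, hw⟩ := exists_isPhaseGeneric hΛ m
    have ⟨_, hx⟩ := hw.exists_update hΛ
    ⟨_, hx⟩

end Generic

theorem Set.Finite.exists_eq_union_ncard_le {α : Type*} {S : Set α} (hS : S.Finite) {m n : ℕ}
    (h : S.ncard ≤ m + n) : ∃ A B, S = A ∪ B ∧ A.ncard ≤ m ∧ B.ncard ≤ n := by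
  obtain ⟨A, hAS, hA⟩ := Set.exists_subset_card_eq (min_le_right m S.ncard)
  refine ⟨A, S \ A, (Set.union_sdiff_cancel hAS).symm, hA.trans_le (min_le_left _ _), ?_⟩
  rw [Set.ncard_sdiff hAS (hS.subset hAS)]
  omega

theorem Set.Nonempty.exists_three_ne {α : Type*} {s : Set α} (hs : s.Nonempty)
    (h1 : s.ncard ≠ 1) (h2 : s.ncard ≠ 2) :
    ∃ a ∈ s, ∃ b ∈ s, ∃ c ∈ s, a ≠ b ∧ a ≠ c ∧ b ≠ c := by
  obtain ⟨t, hts, ht⟩ : ∃ t ⊆ s, t.ncard = 3 := by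
    rcases s.finite_or_infinite with hfin | hinf
    · exact Set.exists_subset_card_eq (by have := (Set.ncard_pos hfin).2 hs; omega)
    · obtain ⟨t, hts, -, ht⟩ := hinf.exists_subset_ncard_eq 3
      exact ⟨t, hts, ht⟩
  obtain ⟨a, b, c, ha, hb, hc, hab, hac, hbc⟩ :=
    (Set.two_lt_ncard_iff (Set.finite_of_ncard_pos (by omega))).1 (by omega : 2 < t.ncard)
  exact ⟨a, hts ha, b, hts hb, c, hts hc, hab, hac, hbc⟩

section InnerProduct

variable {H : Type*} [NormedAddCommGroup H] [InnerProductSpace ℂ H] {Θ : Set ℂ}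

theorem exists_ne_zero_forall_inner_eq_zero [FiniteDimensional ℂ H] {G : Set H} (hG : G.Finite)
    (hcard : G.ncard < finrank ℂ H) : ∃ u ≠ 0, ∀ g ∈ G, ⟪g, u⟫_ℂ = 0 := by
  have hspan : span ℂ G ≠ ⊤ := by
    intro htop
    have := finrank_span_finset_le_card (R := ℂ) hG.toFinset
    rw [Set.Finite.coe_toFinset, ← Set.ncard_eq_toFinset_card G hG] at this
    rw [Set.finrank, htop, finrank_top] at this
    omega
  obtain ⟨u, hu, hu0⟩ := Submodule.exists_mem_ne_zero_of_ne_bot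
    (mt Submodule.orthogonal_eq_bot_iff.1 hspan)
  exact ⟨u, hu0, fun g hg => Submodule.inner_right_of_mem_orthogonal (subset_span hg) hu⟩

theorem not_doesPR_of_forall_inner_eq_zero {G : Set H} {u : H} (hΘ : Θ.Nonempty) (hu : u ≠ 0)
    (hG : ∀ g ∈ G, ⟪g, u⟫_ℂ = 0) : ¬DoesPR G Θ := fun hPR => by
  obtain ⟨θ₀, hθ₀⟩ := hΘ
  obtain ⟨θ, -, h⟩ := hPR u 0 fun g hg => ⟨θ₀, hθ₀, by simp [hG g hg]⟩
  exact hu (by simpa using h)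

theorem not_doesPR_of_ncard_lt [FiniteDimensional ℂ H] {G : Set H} (hΘ : Θ.Nonempty)
    (hG : G.Finite) (hcard : G.ncard < finrank ℂ H) : ¬DoesPR G Θ :=
  have ⟨_, hu, hGu⟩ := exists_ne_zero_forall_inner_eq_zero hG hcard
  not_doesPR_of_forall_inner_eq_zero hΘ hu hGu

/-- With `f = β • u - α • v` and `h = u - v` one has `f - θ • h = (β - θ) • u + (θ - α) • v`,
so the phases `α, β, γ` are admissible on `P, Q, R`, while `f = θ • h` would make `u, v`
dependent. -/
theorem not_doesPR_union_union {P Q R : Set H} {α β γ : ℂ} (hα : α ∈ Θ) (hβ : β ∈ Θ)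
    (hγ : γ ∈ Θ) (hαβ : α ≠ β) {u v : H} (huv : LinearIndependent ℂ ![u, v])
    (hP : ∀ g ∈ P, ⟪g, u⟫_ℂ = 0) (hQ : ∀ g ∈ Q, ⟪g, v⟫_ℂ = 0)
    (hR : ∀ g ∈ R, ⟪g, (β - γ) • u + (γ - α) • v⟫_ℂ = 0) : ¬DoesPR (P ∪ Q ∪ R) Θ := by
  intro hPR
  have key : ∀ θ : ℂ, (β • u - α • v) - θ • (u - v) = (β - θ) • u + (θ - α) • v :=
    fun θ => by module
  have phase : ∀ g θ, ⟪g, (β - θ) • u + (θ - α) • v⟫_ℂ = 0 →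
      ⟪g, β • u - α • v⟫_ℂ = θ * ⟪g, u - v⟫_ℂ := fun g θ h => by
    rwa [← key, inner_sub_right, inner_smul_right, sub_eq_zero] at h
  obtain ⟨θ, -, hθ⟩ := hPR (β • u - α • v) (u - v) <| by
    rintro g ((hg | hg) | hg)
    · exact ⟨α, hα, phase g α (by simp [hP g hg])⟩
    · exact ⟨β, hβ, phase g β (by simp [hQ g hg])⟩
    · exact ⟨γ, hγ, phase g γ (hR g hg)⟩
  obtain ⟨hβθ, hθα⟩ :=
    LinearIndependent.pair_iff.1 huv (β - θ) (θ - α) (by rw [← key, hθ, sub_self])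
  exact hαβ (by linear_combination -hβθ - hθα)

theorem not_doesPR_union {P Q : Set H} {α β : ℂ} (hα : α ∈ Θ) (hβ : β ∈ Θ) (hαβ : α ≠ β)
    {u v : H} (hu : u ≠ 0) (hv : v ≠ 0) (hP : ∀ g ∈ P, ⟪g, u⟫_ℂ = 0)
    (hQ : ∀ g ∈ Q, ⟪g, v⟫_ℂ = 0) : ¬DoesPR (P ∪ Q) Θ := by
  by_cases huv : LinearIndependent ℂ ![u, v]
  · simpa using not_doesPR_union_union (R := ∅) hα hβ hα hαβ huv hP hQ (by simp)
  obtain ⟨a, rfl⟩ : ∃ a : ℂ, a • u = v := by simpa [LinearIndependent.pair_iff' hu] using huv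
  refine not_doesPR_of_forall_inner_eq_zero ⟨α, hα⟩ hv ?_
  rintro g (hg | hg)
  · simp [hP g hg]
  · exact hQ g hg

theorem not_doesPR_of_ncard_add_two_le [FiniteDimensional ℂ H] {G : Set H} {α β : ℂ}
    (hα : α ∈ Θ) (hβ : β ∈ Θ) (hαβ : α ≠ β) (hG : G.Finite)
    (hcard : G.ncard + 2 ≤ 2 * finrank ℂ H) : ¬DoesPR G Θ := by
  obtain ⟨A, B, rfl, hA, hB⟩ :=
    hG.exists_eq_union_ncard_le (m := finrank ℂ H - 1) (n := finrank ℂ H - 1) (by omega)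
  obtain ⟨hAf, hBf⟩ := Set.finite_union.1 hG
  obtain ⟨u, hu, hAu⟩ := exists_ne_zero_forall_inner_eq_zero hAf (by omega)
  obtain ⟨v, hv, hBv⟩ := exists_ne_zero_forall_inner_eq_zero hBf (by omega)
  exact not_doesPR_union hα hβ hαβ hu hv hAu hBv

theorem not_doesPR_union_union_singleton [FiniteDimensional ℂ H] (hrank : 1 < finrank ℂ H)
    {A B : Set H} {c u v : H} {α β γ : ℂ} (hα : α ∈ Θ) (hβ : β ∈ Θ) (hγ : γ ∈ Θ)
    (hαβ : α ≠ β) (hαγ : α ≠ γ) (hβγ : β ≠ γ) (hu : u ≠ 0) (hv : v ≠ 0)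
    (hA : ∀ g ∈ A, ⟪g, u⟫_ℂ = 0) (hB : ∀ g ∈ B, ⟪g, v⟫_ℂ = 0) : ¬DoesPR (A ∪ B ∪ {c}) Θ := by
  by_cases huv : LinearIndependent ℂ ![u, v]
  swap
  · obtain ⟨a, rfl⟩ : ∃ a : ℂ, a • u = v := by simpa [LinearIndependent.pair_iff' hu] using huv
    obtain ⟨z, hz, hcz⟩ := exists_ne_zero_forall_inner_eq_zero (Set.finite_singleton c)
      (by rwa [Set.ncard_singleton])
    refine not_doesPR_union hα hβ hαβ hv hz ?_ hcz
    rintro g (hg | hg)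
    · simp [hA g hg]
    · exact hB g hg
  by_cases hcu : ⟪c, u⟫_ℂ = 0
  · rw [Set.union_right_comm]
    refine not_doesPR_union hα hβ hαβ hu hv ?_ hB
    rintro g (hg | rfl)
    exacts [hA g hg, hcu]
  by_cases hcv : ⟪c, v⟫_ℂ = 0
  · rw [Set.union_assoc]
    refine not_doesPR_union hα hβ hαβ hu hv hA ?_
    rintro g (hg | rfl)
    exacts [hB g hg, hcv]
  -- rescale `u, v` so that the phase `γ` is admissible at `c`
  set s := (γ - α) * ⟪c, v⟫_ℂ
  set t := (γ - β) * ⟪c, u⟫_ℂ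
  have hs : s ≠ 0 := mul_ne_zero (sub_ne_zero.2 hαγ.symm) hcv
  have ht : t ≠ 0 := mul_ne_zero (sub_ne_zero.2 hβγ.symm) hcu
  refine not_doesPR_union_union hα hβ hγ hαβ (u := s • u) (v := t • v) ?_
    (fun g hg => by simp [hA g hg])
    (fun g hg => by simp [hB g hg]) ?_
  · refine LinearIndependent.pair_iff.2 fun a b hab => ?_
    obtain ⟨has, hbt⟩ := LinearIndependent.pair_iff.1 huv (a * s) (b * t)
      (by rwa [smul_smul, smul_smul] at hab)
    exact ⟨(mul_eq_zero.1 has).resolve_right hs, (mul_eq_zero.1 hbt).resolve_right ht⟩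
  · rintro g rfl
    simp only [inner_add_right, inner_smul_right, s, t]
    ring

theorem not_doesPR_of_ncard_lt_two_mul [FiniteDimensional ℂ H] (hrank : 1 < finrank ℂ H)
    {G : Set H} {α β γ : ℂ} (hα : α ∈ Θ) (hβ : β ∈ Θ) (hγ : γ ∈ Θ)
    (hαβ : α ≠ β) (hαγ : α ≠ γ) (hβγ : β ≠ γ) (hG : G.Finite)
    (hcard : G.ncard < 2 * finrank ℂ H) : ¬DoesPR G Θ := by
  obtain ⟨A, B', rfl, hA, hB'⟩ :=
    hG.exists_eq_union_ncard_le (m := finrank ℂ H - 1) (n := finrank ℂ H) (by omega)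
  obtain ⟨hAf, hB'f⟩ := Set.finite_union.1 hG
  obtain ⟨B, C, rfl, hB, hC⟩ :=
    hB'f.exists_eq_union_ncard_le (m := finrank ℂ H - 1) (n := 1) (by omega)
  obtain ⟨hBf, hCf⟩ := Set.finite_union.1 hB'f
  obtain ⟨u, hu, hAu⟩ := exists_ne_zero_forall_inner_eq_zero hAf (by omega)
  obtain ⟨v, hv, hBv⟩ := exists_ne_zero_forall_inner_eq_zero hBf (by omega)
  rw [← Set.union_assoc]
  obtain rfl | ⟨c, rfl⟩ := (Set.ncard_le_one_iff_eq hCf).1 hC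
  · rw [Set.union_empty]
    exact not_doesPR_union hα hβ hαβ hu hv hAu hBv
  · exact not_doesPR_union_union_singleton hrank hα hβ hγ hαβ hαγ hβγ hu hv hAu hBv

theorem eq_smul_of_linearIndepOn [FiniteDimensional ℂ H] {ι : Type*} {w : ι → H} {s : Finset ι}
    (hw : LinearIndepOn ℂ w (s : Set ι)) (hs : #s = finrank ℂ H) {f h : H} {θ : ℂ}
    (hfh : ∀ i ∈ s, ⟪w i, f⟫_ℂ = θ * ⟪w i, h⟫_ℂ) : f = θ • h :=
  InnerProductSpace.ext_inner_left_basis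
    (basisOfLinearIndependentOfCardEqFinrank' _ hw (by simpa using hs))
    fun i => by simp [inner_smul_right, hfh i i.2]

theorem eq_zero_of_forall_inner_add_inner_eq_zero {ι : Type*} (b : Basis ι ℂ (H × H)) {f h : H}
    (hb : ∀ i, ⟪(b i).1, f⟫_ℂ + ⟪(b i).2, h⟫_ℂ = 0) : f = 0 ∧ h = 0 := by
  let L : H × H →ₗ[ℂ] ℂ :=
    innerₛₗ ℂ f ∘ₗ LinearMap.fst ℂ H H + innerₛₗ ℂ h ∘ₗ LinearMap.snd ℂ H H
  have hL : L = 0 := b.ext fun i => by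
    simpa [L, inner_conj_symm] using congrArg conj (hb i)
  have hf := LinearMap.congr_fun hL (f, 0)
  have hh := LinearMap.congr_fun hL (0, h)
  simp only [L, LinearMap.add_apply, LinearMap.comp_apply, LinearMap.fst_apply,
    LinearMap.snd_apply, innerₛₗ_apply_apply, inner_zero_right, add_zero, zero_add,
    LinearMap.zero_apply, inner_self_eq_zero] at hf hh
  exact ⟨hf, hh⟩

theorem doesPR_image_range_of_ncard_mul_lt [FiniteDimensional ℂ H] {w : ℕ → H} {m : ℕ}
    (hw : ∀ s ⊆ Finset.range m, #s ≤ finrank ℂ H → LinearIndepOn ℂ w (s : Set ℕ))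
    (hΘ : Θ.Finite) (hm : Θ.ncard * (finrank ℂ H - 1) < m) :
    DoesPR (w '' ↑(Finset.range m)) Θ := by
  classical
  intro f h hfh
  choose! φ hφΘ hφ using fun i (hi : i ∈ Finset.range m) =>
    hfh (w i) (Set.mem_image_of_mem w hi)
  obtain ⟨θ, hθ, hfib⟩ := Finset.exists_lt_card_fiber_of_mul_lt_card_of_maps_to
    (t := hΘ.toFinset) (fun i hi => hΘ.mem_toFinset.2 (hφΘ i hi))
    (by rwa [← Set.ncard_eq_toFinset_card _ hΘ, Finset.card_range])
  obtain ⟨s, hs, hscard⟩ := Finset.exists_subset_card_eq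
    (s := {i ∈ Finset.range m | φ i = θ}) (n := finrank ℂ H) (by omega)
  refine ⟨θ, hΘ.mem_toFinset.1 hθ, eq_smul_of_linearIndepOn
    (hw s (hs.trans (Finset.filter_subset _ _)) hscard.le) hscard fun i hi => ?_⟩
  obtain ⟨hi, rfl⟩ := Finset.mem_filter.1 (hs hi)
  exact hφ i hi

/-- The pair `(w, -conj θ • w)` encodes the functional `(f, h) ↦ ⟪w, f⟫ - θ ⟪w, h⟫`. -/
theorem doesPR_image_range_of_isPhaseGeneric [FiniteDimensional ℂ H] {w : ℕ → H}
    (hΘ : Θ.Nonempty) (hw : IsPhaseGeneric ((fun θ => -conj θ) '' Θ) (2 * finrank ℂ H) w) :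
    DoesPR (w '' ↑(Finset.range (2 * finrank ℂ H))) Θ := by
  intro f h hfh
  choose! φ hφΘ hφ using fun i (hi : i ∈ Finset.range (2 * finrank ℂ H)) =>
    hfh (w i) (Set.mem_image_of_mem w hi)
  by_cases hbig : ∃ θ ∈ Θ, finrank ℂ H ≤ #{i ∈ Finset.range (2 * finrank ℂ H) | φ i = θ}
  · obtain ⟨θ, hθ, hfib⟩ := hbig
    obtain ⟨s, hs, hscard⟩ := Finset.exists_subset_card_eq hfib
    refine ⟨θ, hθ, eq_smul_of_linearIndepOn (hw.linearIndepOn (Set.mem_image_of_mem _ hθ)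
      (hs.trans (Finset.filter_subset _ _)) hscard.le) hscard fun i hi => ?_⟩
    obtain ⟨hi, rfl⟩ := Finset.mem_filter.1 (hs hi)
    exact hφ i hi
  push Not at hbig
  have hinv : Function.Involutive fun θ : ℂ => -conj θ := fun θ => by simp
  have hli := hw _ subset_rfl (fun i => -conj (φ i))
    (fun i hi => Set.mem_image_of_mem _ (hφΘ i hi)) (by simp) fun a => by
      simp_rw [hinv.eq_iff]
      by_cases ha : -conj a ∈ Θ
      · exact (hbig _ ha).le
      · rw [Finset.filter_false_of_mem fun i hi (hi' : φ i = -conj a) => ha (hi' ▸ hφΘ i hi)]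
        simp
  obtain ⟨rfl, rfl⟩ := eq_zero_of_forall_inner_add_inner_eq_zero (f := f) (h := h)
    (basisOfLinearIndependentOfCardEqFinrank' _ hli (by simp [two_mul]))
    fun i => by simp [inner_smul_left, hφ i i.2]
  obtain ⟨θ₀, hθ₀⟩ := hΘ
  exact ⟨θ₀, hθ₀, by simp⟩

end InnerProduct

theorem minPR_eq_of_forall {d n : ℕ} {Θ : Set ℂ}
    (hup : ∃ G : Set (EuclideanSpace ℂ (Fin d)), G.Finite ∧ G.ncard ≤ n ∧ DoesPR G Θ)
    (hlow : ∀ G : Set (EuclideanSpace ℂ (Fin d)), G.Finite → G.ncard < n → ¬DoesPR G Θ) :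
    minPR d Θ = n := by
  obtain ⟨G, hG, hcard, hPR⟩ := hup
  unfold minPR
  refine le_antisymm (le_trans (Nat.sInf_le ⟨G, hG, rfl, hPR⟩) hcard)
    (le_csInf ⟨G.ncard, G, hG, rfl, hPR⟩ ?_)
  rintro _ ⟨G', hG', rfl, hPR'⟩
  exact not_lt.1 fun hlt => hlow G' hG' hlt hPR'

theorem stmt9_general (d : ℕ) (hd : 2 ≤ d)
    (Θ : Set ℂ) (hcnt : Θ.Countable) (hne : Θ.Nonempty) :
    minPR d Θ =
      if Θ.ncard = 1 then d else if Θ.ncard = 2 then 2 * d - 1 else 2 * d := by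
  have hrank : finrank ℂ (EuclideanSpace ℂ (Fin d)) = d := finrank_euclideanSpace_fin
  obtain ⟨w, hw⟩ := exists_isPhaseGeneric (V := EuclideanSpace ℂ (Fin d))
    (hcnt.image fun θ => -conj θ) (2 * finrank ℂ (EuclideanSpace ℂ (Fin d)))
  have himage (m : ℕ) : (w '' ↑(Finset.range m)).Finite ∧ (w '' ↑(Finset.range m)).ncard ≤ m :=
    ⟨(Finset.finite_toSet _).image w,
      (Set.ncard_image_le (Finset.finite_toSet _)).trans (by simp)⟩
  have hspark {m : ℕ} (hm : m ≤ 2 * d) (s) (hs : s ⊆ Finset.range m) :=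
    hw.linearIndepOn (Set.mem_image_of_mem _ hne.some_mem)
      (hs.trans (Finset.range_mono (by omega)))
  split_ifs with h1 h2
  · refine minPR_eq_of_forall ⟨_, (himage d).1, (himage d).2, doesPR_image_range_of_ncard_mul_lt
      (hspark (by omega)) (Set.finite_of_ncard_pos (by omega)) (by rw [h1, hrank]; omega)⟩
      fun G hG hcard => not_doesPR_of_ncard_lt hne hG (by omega)
  · obtain ⟨α, β, hαβ, hΘ⟩ := Set.ncard_eq_two.1 h2
    refine minPR_eq_of_forall ⟨_, (himage _).1, (himage _).2, doesPR_image_range_of_ncard_mul_lt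
      (hspark (by omega)) (Set.finite_of_ncard_pos (by omega)) (by rw [h2]; omega)⟩
      fun G hG hcard => not_doesPR_of_ncard_add_two_le (hΘ ▸ Set.mem_insert α {β})
        (hΘ ▸ Set.mem_insert_of_mem α rfl) hαβ hG (by omega)
  · obtain ⟨α, hα, β, hβ, γ, hγ, hαβ, hαγ, hβγ⟩ := hne.exists_three_ne h1 h2
    refine minPR_eq_of_forall ⟨_, (himage _).1, (himage _).2.trans (by omega),
      doesPR_image_range_of_isPhaseGeneric hne hw⟩ fun G hG hcard =>
        not_doesPR_of_ncard_lt_two_mul (by omega) hα hβ hγ hαβ hαγ hβγ hG (by omega)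

theorem stmt9 (d : ℕ) (hd : 2 ≤ d)
    (Θ : Set ℂ) (hΘ : Θ ⊆ unitCircle) (hcnt : Θ.Countable) (hne : Θ.Nonempty) :
    minPR d Θ =
      if Θ.ncard = 1 then d else if Θ.ncard = 2 then 2 * d - 1 else 2 * d :=
  stmt9_general d hd Θ hcnt hne
end
end

section
/- Let d ≥ 1 and suppose Θ ⊆ 𝕋 contains a non-trivial arc, i.e., there exist real numbers u < v such that {e^{it} : t ∈ [u, v]} ⊆ Θ. Then a finite nonempty set G = {g_1, …, g_m} ⊆ ℂ^d does Θ-PR in ℂ^d if and only if G does 𝕋-PR (phase retrieval) in ℂ^d. -/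
open MeasureTheory Set

noncomputable section

/-!
Given `f, h` whose measurements differ by unimodular phases `θ_g`, first rotate `f` so that no
`θ_g` equals `-1` (possible since `G` is finite and `𝕋` is infinite). For real `r → 1⁻` the Möbius
images `(θ_g + r) / (1 + r θ_g)` are unimodular and tend to `1`, so for a point `α` of the relative
interior of `Θ` all the phases `α (θ_g + r) / (1 + r θ_g)` lie in `Θ`. These are exactly the phases
of the pair `f' = α (f + r h)`, `h' = h + r f`, hence `Θ`-PR gives `f' = ϑ h'`. Solving this linear
relation gives `f = θ h` with `θ = (ϑ - r α) / (α - r ϑ)`, which is unimodular since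
`|α - r ϑ| = |ϑ - r α|` for unimodular `α, ϑ`.
-/

open Filter Topology

@[simp]
theorem mem_unitCircle {z : ℂ} : z ∈ unitCircle ↔ ‖z‖ = 1 := Iff.rfl

theorem unitCircle_eq_sphere : unitCircle = Metric.sphere (0 : ℂ) 1 := by
  ext z; simp

theorem arc_mem_nhdsWithin_unitCircle {u v : ℝ} (huv : u < v) :
    {z : ℂ | ∃ t : ℝ, u ≤ t ∧ t ≤ v ∧ z = Complex.exp (Complex.I * (t : ℂ))} ∈
      𝓝[unitCircle] Complex.exp (Complex.I * (((u + v) / 2 : ℝ) : ℂ)) := by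
  obtain ⟨U, hU, hUarc⟩ := isOpen_induced_iff.mp <|
    isLocalHomeomorph_circleExp.isOpenMap (Ioo u v) isOpen_Ioo
  refine mem_nhdsWithin.mpr ⟨U, hU, ?_, ?_⟩
  · have hmid : Circle.exp ((u + v) / 2) ∈ Circle.exp '' Ioo u v :=
      mem_image_of_mem _ ⟨by linarith, by linarith⟩
    rw [← hUarc] at hmid
    rw [mul_comm, ← Circle.coe_exp]
    exact hmid
  · rintro z ⟨hzU, hz⟩
    have hzarc : (⟨z, mem_sphere_zero_iff_norm.mpr hz⟩ : Circle) ∈ Circle.exp '' Ioo u v := by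
      rw [← hUarc]; exact hzU
    obtain ⟨t, ⟨hut, htv⟩, hzt⟩ := hzarc
    exact ⟨t, hut.le, htv.le, by rw [mul_comm, ← Circle.coe_exp, hzt]⟩

theorem unitCircle_infinite : unitCircle.Infinite := by
  rw [unitCircle_eq_sphere]
  refine (isConnected_sphere ?_ 0 zero_le_one).isPreconnected.infinite_of_nontrivial
    ⟨1, by simp, -1, by simp, by norm_num⟩
  rw [Complex.rank_real_complex]; norm_num

theorem norm_sub_ofReal_mul_comm {a b : ℂ} (ha : ‖a‖ = 1) (hb : ‖b‖ = 1) (r : ℝ) :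
    ‖a - r * b‖ = ‖b - r * a‖ := by
  have key : a - r * b = a * b * (starRingEnd ℂ) (b - r * a) := by
    have hb' : b * (starRingEnd ℂ) b = 1 := by
      rw [Complex.mul_conj, Complex.normSq_eq_norm_sq, hb]; norm_num
    have ha' : a * (starRingEnd ℂ) a = 1 := by
      rw [Complex.mul_conj, Complex.normSq_eq_norm_sq, ha]; norm_num
    simp only [map_sub, map_mul, Complex.conj_ofReal]
    linear_combination -a * hb' + r * b * ha'
  rw [key, norm_mul, norm_mul, ha, hb, Complex.norm_conj, one_mul, one_mul]

theorem sub_ofReal_mul_ne_zero {a b : ℂ} (ha : ‖a‖ = 1) (hb : ‖b‖ = 1) {r : ℝ} (hr : |r| < 1) :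
    a - r * b ≠ 0 := by
  intro h
  have := congrArg norm (sub_eq_zero.mp h)
  rw [norm_mul, hb, mul_one, Complex.norm_real, Real.norm_eq_abs, ha] at this
  exact hr.ne this.symm

theorem one_add_ofReal_mul_ne_zero {z : ℂ} (hz : ‖z‖ = 1) {r : ℝ} (hr : |r| < 1) :
    1 + r * z ≠ 0 := by
  simpa using sub_ofReal_mul_ne_zero norm_one (by rwa [norm_neg]) hr (b := -z)

def mobius (r : ℝ) (z : ℂ) : ℂ := (z + r) / (1 + r * z)

theorem mobius_mul_one_add_ofReal_mul {z : ℂ} (hz : ‖z‖ = 1) {r : ℝ} (hr : |r| < 1) :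
    mobius r z * (1 + r * z) = z + r :=
  div_mul_cancel₀ _ (one_add_ofReal_mul_ne_zero hz hr)

theorem norm_mobius {z : ℂ} (hz : ‖z‖ = 1) {r : ℝ} (hr : |r| < 1) : ‖mobius r z‖ = 1 := by
  have h := norm_sub_ofReal_mul_comm hz (b := -1) (by simp) r
  rw [mul_neg_one, sub_neg_eq_add, ← neg_add', norm_neg] at h
  rw [mobius, norm_div, h, div_self (norm_ne_zero_iff.mpr (one_add_ofReal_mul_ne_zero hz hr))]

theorem tendsto_mobius {z : ℂ} (hz : z ≠ -1) :
    Tendsto (fun r : ℝ => mobius r z) (𝓝 1) (𝓝 1) := by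
  have hden : 1 + z ≠ 0 := fun h => hz (eq_neg_of_add_eq_zero_right h)
  have hcont : ContinuousAt (fun r : ℝ => mobius r z) 1 := by
    refine ContinuousAt.div (by fun_prop) (by fun_prop) ?_
    simpa using hden
  simpa [mobius, add_comm z, div_self hden] using hcont.tendsto

theorem exists_unit_smul_of_smul_add_eq {E : Type*} [AddCommGroup E] [Module ℂ E] {α ϑ : ℂ}
    (hα : ‖α‖ = 1) (hϑ : ‖ϑ‖ = 1) {r : ℝ} (hr : |r| < 1) {f h : E}
    (heq : α • (f + (r : ℂ) • h) = ϑ • (h + (r : ℂ) • f)) : ∃ θ ∈ unitCircle, f = θ • h := by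
  have hne : α - r * ϑ ≠ 0 := sub_ofReal_mul_ne_zero hα hϑ hr
  have hsolve : (α - r * ϑ) • f = (ϑ - r * α) • h := by
    linear_combination (norm := module) heq
  refine ⟨(α - r * ϑ)⁻¹ * (ϑ - r * α), ?_, by rw [mul_smul, ← hsolve, inv_smul_smul₀ hne]⟩
  rw [mem_unitCircle, norm_mul, norm_inv, norm_sub_ofReal_mul_comm hϑ hα,
    inv_mul_cancel₀ (norm_ne_zero_iff.mpr hne)]

namespace DoesPR

variable {H : Type*} [NormedAddCommGroup H] [InnerProductSpace ℂ H] {G : Set H} {Θ : Set ℂ}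

theorem eq_zero_of_inner_eq_zero (hPR : DoesPR G Θ) (hΘ : Θ.Nonempty) {h : H}
    (hh : ∀ g ∈ G, inner ℂ g h = 0) : h = 0 := by
  obtain ⟨θ, hθ⟩ := hΘ
  obtain ⟨_, _, rfl⟩ := hPR h 0 fun g hg => ⟨θ, hθ, by simp [hh g hg]⟩
  exact smul_zero _

theorem mono {Θ' : Set ℂ} (hPR : DoesPR G Θ) (hΘ' : Θ'.Nonempty) (hsub : Θ' ⊆ Θ) :
    DoesPR G Θ' := by
  intro f h hfh
  obtain ⟨θ, -, rfl⟩ := hPR f h fun g hg => (hfh g hg).imp fun θ ⟨hθ, he⟩ => ⟨hsub hθ, he⟩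
  by_cases hh : ∀ g ∈ G, inner ℂ g h = 0
  · rw [hPR.eq_zero_of_inner_eq_zero (hΘ'.mono hsub) hh, smul_zero]
    obtain ⟨θ', hθ'⟩ := hΘ'
    exact ⟨θ', hθ', (smul_zero θ').symm⟩
  · push Not at hh
    obtain ⟨g, hg, hgh⟩ := hh
    obtain ⟨θ', hθ', he⟩ := hfh g hg
    rw [inner_smul_right] at he
    exact ⟨θ', hθ', by rw [mul_right_cancel₀ hgh he]⟩

theorem exists_eq_smul_of_ne_neg_one (hPR : DoesPR G Θ) (hG : G.Finite) (hΘ : Θ ⊆ unitCircle)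
    {α : ℂ} (hα : α ∈ unitCircle) (hαΘ : Θ ∈ 𝓝[unitCircle] α) {f h : H}
    (hfh : ∀ g ∈ G, ∃ θ ∈ unitCircle, θ ≠ -1 ∧ inner ℂ g f = θ * inner ℂ g h) :
    ∃ θ ∈ unitCircle, f = θ • h := by
  choose! θ hθ hθ1 hfθ using hfh
  have hunit : ∀ᶠ r in 𝓝[<] (1 : ℝ), r ∈ Ioo (-1) 1 := Ioo_mem_nhdsLT (by norm_num)
  have hnear : ∀ g ∈ G, ∀ᶠ r in 𝓝[<] (1 : ℝ), α * mobius r (θ g) ∈ Θ := by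
    intro g hg
    have htendsto : Tendsto (fun r => α * mobius r (θ g)) (𝓝[<] 1) (𝓝[unitCircle] α) := by
      refine tendsto_nhdsWithin_iff.mpr ⟨?_, ?_⟩
      · simpa using ((tendsto_mobius (hθ1 g hg)).const_mul α).mono_left nhdsWithin_le_nhds
      · filter_upwards [hunit] with r hr
        rw [mem_unitCircle, norm_mul, mem_unitCircle.mp hα,
          norm_mobius (hθ g hg) (abs_lt.mpr hr), one_mul]
    exact htendsto hαΘ
  obtain ⟨r, hr, hrΘ⟩ := (hunit.and ((eventually_all_finite hG).mpr hnear)).exists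
  have hr' : |r| < 1 := abs_lt.mpr hr
  obtain ⟨ϑ, hϑ, heq⟩ := hPR (α • (f + (r : ℂ) • h)) (h + (r : ℂ) • f) fun g hg =>
    ⟨_, hrΘ g hg, by
      simp only [inner_smul_right, inner_add_right, hfθ g hg]
      linear_combination (-α * inner ℂ g h) * mobius_mul_one_add_ofReal_mul (hθ g hg) hr'⟩
  exact exists_unit_smul_of_smul_add_eq hα (hΘ hϑ) hr' heq

theorem unitCircle_of_mem_nhdsWithin (hPR : DoesPR G Θ) (hG : G.Finite) (hΘ : Θ ⊆ unitCircle)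
    {α : ℂ} (hα : α ∈ unitCircle) (hαΘ : Θ ∈ 𝓝[unitCircle] α) : DoesPR G unitCircle := by
  intro f h hfh
  choose! θ hθ hfθ using hfh
  obtain ⟨β, hβ, hβbad⟩ := (unitCircle_infinite.sdiff (hG.image fun g => (-θ g)⁻¹)).nonempty
  have hβ0 : β ≠ 0 := norm_ne_zero_iff.mp (mem_unitCircle.mp hβ ▸ one_ne_zero)
  obtain ⟨θ', hθ', he⟩ := hPR.exists_eq_smul_of_ne_neg_one hG hΘ hα hαΘ (f := β • f) (h := h)
    fun g hg => ⟨β * θ g, by simp [mem_unitCircle.mp hβ, mem_unitCircle.mp (hθ g hg)], fun h1 => hβbad ⟨g, hg,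
      (eq_inv_of_mul_eq_one_left (by rw [mul_neg, h1, neg_neg])).symm⟩,
      by rw [inner_smul_right, hfθ g hg, mul_assoc]⟩
  refine ⟨β⁻¹ * θ', ?_, by rw [mul_smul, ← he, inv_smul_smul₀ hβ0]⟩
  simp [mem_unitCircle.mp hβ, mem_unitCircle.mp hθ']

end DoesPR

theorem stmt10_general (d : ℕ)
    (Θ : Set ℂ) (hΘ : Θ ⊆ unitCircle)
    (u v : ℝ) (huv : u < v)
    (harc : {z : ℂ | ∃ t : ℝ, u ≤ t ∧ t ≤ v ∧ z = Complex.exp (Complex.I * (t : ℂ))} ⊆ Θ)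
    (m : ℕ) (g : Fin m → EuclideanSpace ℂ (Fin d)) :
    DoesPR (Set.range g) Θ ↔ DoesPR (Set.range g) unitCircle := by
  have hαΘ := mem_of_superset (arc_mem_nhdsWithin_unitCircle huv) harc
  have hα : Complex.exp (Complex.I * (((u + v) / 2 : ℝ) : ℂ)) ∈ unitCircle := by
    rw [mem_unitCircle, mul_comm, Complex.norm_exp_ofReal_mul_I]
  exact ⟨fun hPR => hPR.unitCircle_of_mem_nhdsWithin (finite_range g) hΘ hα hαΘ,
    fun hPR => hPR.mono ⟨_, mem_of_mem_nhdsWithin hα hαΘ⟩ hΘ⟩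

theorem stmt10 (d : ℕ) (hd : 1 ≤ d)
    (Θ : Set ℂ) (hΘ : Θ ⊆ unitCircle)
    (u v : ℝ) (huv : u < v)
    (harc : {z : ℂ | ∃ t : ℝ, u ≤ t ∧ t ≤ v ∧ z = Complex.exp (Complex.I * (t : ℂ))} ⊆ Θ)
    (m : ℕ) (hm : 1 ≤ m) (g : Fin m → EuclideanSpace ℂ (Fin d)) :
    DoesPR (Set.range g) Θ ↔ DoesPR (Set.range g) unitCircle :=
  stmt10_general d Θ hΘ u v huv harc m g
end
end

section
/- Let H be a complex Hilbert space, let Θ ⊆ 𝕋 be nonempty, and let G ⊆ H be nonempty. (1) If G does Θ-PR in H, then G is complete in H. (2) If G is complete in H and Θ is a singleton, then G does Θ-PR in H. -/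
open MeasureTheory Set

noncomputable section

/-! A vector orthogonal to `G` produces the same measurements as `0`, so phase retrieval forces it
to vanish. Conversely, if `Θ = {θ₀}` the hypothesis says exactly that `f - θ₀ • h` is orthogonal
to `G`, hence zero when `G` is complete. -/

theorem Submodule.mem_orthogonal_span_iff {𝕜 E : Type*} [RCLike 𝕜] [NormedAddCommGroup E]
    [InnerProductSpace 𝕜 E] {s : Set E} {v : E} :
    v ∈ (Submodule.span 𝕜 s)ᗮ ↔ ∀ u ∈ s, inner 𝕜 u v = 0 := by
  refine ⟨fun hv u hu => Submodule.inner_right_of_mem_orthogonal (Submodule.subset_span hu) hv,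
    fun hs => ?_⟩
  rw [Submodule.mem_orthogonal]
  intro u hu
  induction hu using Submodule.span_induction with
  | mem u hu => exact hs u hu
  | zero => exact inner_zero_left v
  | add x y _ _ hx hy => rw [inner_add_left, hx, hy, add_zero]
  | smul c x _ hx => rw [inner_smul_left, hx, mul_zero]

section

variable {H : Type*} [NormedAddCommGroup H] [InnerProductSpace ℂ H] [CompleteSpace H] {G : Set H}

theorem isCompleteSystem_iff :
    IsCompleteSystem G ↔ ∀ v : H, (∀ g ∈ G, inner ℂ g v = 0) → v = 0 := by
  simp only [IsCompleteSystem, Submodule.topologicalClosure_eq_top_iff, Submodule.eq_bot_iff,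
    Submodule.mem_orthogonal_span_iff]

theorem DoesPR.isCompleteSystem {Θ : Set ℂ} (hPR : DoesPR G Θ) (hΘ : Θ.Nonempty) :
    IsCompleteSystem G := by
  obtain ⟨θ₀, hθ₀⟩ := hΘ
  refine isCompleteSystem_iff.2 fun v hv => ?_
  obtain ⟨θ, -, hθ⟩ := hPR v 0 fun g hg => ⟨θ₀, hθ₀, by rw [hv g hg, inner_zero_right, mul_zero]⟩
  rw [hθ, smul_zero]

theorem IsCompleteSystem.doesPR_singleton (hG : IsCompleteSystem G) (θ₀ : ℂ) :
    DoesPR G {θ₀} := by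
  intro f h hfh
  refine ⟨θ₀, rfl, sub_eq_zero.1 <| isCompleteSystem_iff.1 hG _ fun g hg => ?_⟩
  obtain ⟨θ, rfl, hθ⟩ := hfh g hg
  rw [inner_sub_right, inner_smul_right, hθ, sub_self]

end

theorem stmt11_general {H : Type*} [NormedAddCommGroup H] [InnerProductSpace ℂ H] [CompleteSpace H]
    (G : Set H) (Θ : Set ℂ) (hne : Θ.Nonempty) :
    (DoesPR G Θ → IsCompleteSystem G) ∧
    (IsCompleteSystem G → (∃ θ₀ : ℂ, Θ = {θ₀}) → DoesPR G Θ) := by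
  refine ⟨fun hPR => hPR.isCompleteSystem hne, ?_⟩
  rintro hG ⟨θ₀, rfl⟩
  exact hG.doesPR_singleton θ₀

theorem stmt11 {H : Type*} [NormedAddCommGroup H] [InnerProductSpace ℂ H] [CompleteSpace H]
    (G : Set H) (hG : G.Nonempty) (Θ : Set ℂ) (hΘ : Θ ⊆ unitCircle) (hne : Θ.Nonempty) :
    (DoesPR G Θ → IsCompleteSystem G) ∧
    (IsCompleteSystem G → (∃ θ₀ : ℂ, Θ = {θ₀}) → DoesPR G Θ) :=
  stmt11_general G Θ hne
end
end

section
/- Let H be a complex Hilbert space, let G ⊆ H be nonempty, and let Θ, Θ' ⊆ 𝕋 be nonempty sets with Θ' ⊆ Θ. If G does Θ-PR in H, then G does Θ'-PR in H. -/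
open MeasureTheory Set

noncomputable section

theorem DoesPR.eq_zero_of_forall_inner_eq_zero {H : Type*} [NormedAddCommGroup H]
    [InnerProductSpace ℂ H] {G : Set H} {Θ : Set ℂ} (hPR : DoesPR G Θ) (hΘ : Θ.Nonempty) {h : H}
    (h_orth : ∀ g ∈ G, inner ℂ g h = 0) : h = 0 := by
  obtain ⟨θ, hθ⟩ := hΘ
  obtain ⟨θ', -, rfl⟩ := hPR h 0 fun g hg =>
    ⟨θ, hθ, by rw [h_orth g hg, inner_zero_right, mul_zero]⟩
  exact smul_zero θ'

theorem stmt12_general {H : Type*} [NormedAddCommGroup H] [InnerProductSpace ℂ H]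
    (G : Set H)
    (Θ Θ' : Set ℂ) (hΘ' : Θ'.Nonempty) (hsub : Θ' ⊆ Θ)
    (h : DoesPR G Θ) : DoesPR G Θ' := by
  intro f h₀ hyp
  obtain ⟨θ, -, rfl⟩ := h f h₀ fun g hg =>
    (hyp g hg).imp fun _ hθ => ⟨hsub hθ.1, hθ.2⟩
  by_cases hc : ∃ g ∈ G, inner ℂ g h₀ ≠ 0
  · -- a single nonzero coefficient pins the phase down to the one `θ_g ∈ Θ'` attached to `g`
    obtain ⟨g, hg, hne⟩ := hc
    obtain ⟨θg, hθg, he⟩ := hyp g hg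
    rw [inner_smul_right] at he
    exact ⟨θg, hθg, by rw [mul_right_cancel₀ hne he]⟩
  · push Not at hc
    have h₀_eq : h₀ = 0 := h.eq_zero_of_forall_inner_eq_zero (hΘ'.mono hsub) hc
    obtain ⟨θ₀, hθ₀⟩ := hΘ'
    exact ⟨θ₀, hθ₀, by rw [h₀_eq, smul_zero, smul_zero]⟩

theorem stmt12 {H : Type*} [NormedAddCommGroup H] [InnerProductSpace ℂ H] [CompleteSpace H]
    (G : Set H) (hG : G.Nonempty)
    (Θ Θ' : Set ℂ) (hΘ : Θ ⊆ unitCircle) (hΘ' : Θ'.Nonempty) (hsub : Θ' ⊆ Θ)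
    (h : DoesPR G Θ) : DoesPR G Θ' :=
  stmt12_general G Θ Θ' hΘ' hsub h
end
end

section
/- Let H be a complex Hilbert space of dimension at least 2, let Θ ⊆ 𝕋 be nonempty, and let G ⊆ H be nonempty. Then G fails Θ-PR if and only if there exist linearly independent vectors f, h ∈ H such that for every g ∈ G there exists θ_g ∈ Θ with ⟨f,g⟩ = θ_g⟨h,g⟩, and yet f ≠ θh for every θ ∈ Θ. -/
open MeasureTheory Set

noncomputable section

/-!
A linearly dependent failure of `Θ`-PR yields a nonzero vector orthogonal to `G`: if `f = a • h`
with `a ∉ Θ`, the relation `⟨f,g⟩ = θ_g ⟨h,g⟩` can only hold with `⟨h,g⟩ = 0` (and if `h = 0`,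
then `f ≠ 0` is itself orthogonal to `G`). Such a vector `v` in turn yields a linearly
independent failure: for any `e` independent of `v`, the pair `v + θ₀ • e, e` satisfies the
relation with `θ_g = θ₀`, while `v + θ₀ • e = θ • e` would put `v` in `ℂ e`.
-/

section PhaseRetrieval

variable {H : Type*} [NormedAddCommGroup H] [InnerProductSpace ℂ H]

def PhaseRelated (G : Set H) (Θ : Set ℂ) (f h : H) : Prop :=
  ∀ g ∈ G, ∃ θ ∈ Θ, (inner ℂ g f : ℂ) = θ * (inner ℂ g h : ℂ)

theorem not_doesPR_iff {G : Set H} {Θ : Set ℂ} :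
    ¬ DoesPR G Θ ↔ ∃ f h : H, PhaseRelated G Θ f h ∧ ∀ θ ∈ Θ, f ≠ θ • h := by
  simp only [DoesPR, PhaseRelated, not_forall, not_exists, not_and, exists_prop]

theorem exists_ne_zero_orthogonal_of_not_linearIndependent {G : Set H} {Θ : Set ℂ}
    (hΘ : Θ.Nonempty) {f h : H} (hfh : PhaseRelated G Θ f h) (hne : ∀ θ ∈ Θ, f ≠ θ • h)
    (hdep : ¬ LinearIndependent ℂ ![f, h]) :
    ∃ v : H, v ≠ 0 ∧ ∀ g ∈ G, inner ℂ g v = 0 := by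
  obtain ⟨θ₀, hθ₀⟩ := hΘ
  by_cases hh : h = 0
  · refine ⟨f, fun hf => hne θ₀ hθ₀ (by simp [hf, hh]), fun g hg => ?_⟩
    obtain ⟨θ, -, hθ⟩ := hfh g hg
    simpa [hh] using hθ
  obtain ⟨a, rfl⟩ : ∃ a : ℂ, a • h = f := by
    simpa [LinearIndependent.pair_symm_iff, LinearIndependent.pair_iff' hh] using hdep
  refine ⟨h, hh, fun g hg => ?_⟩
  obtain ⟨θ, hθΘ, hθ⟩ := hfh g hg
  by_contra hgh
  rw [inner_smul_right] at hθ
  exact hne θ hθΘ (by rw [mul_right_cancel₀ hgh hθ])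

theorem exists_linearIndependent_phaseRelated_of_orthogonal {G : Set H} {Θ : Set ℂ}
    (hdim : 1 < Module.rank ℂ H) {θ₀ : ℂ} (hθ₀ : θ₀ ∈ Θ) {v : H} (hv : v ≠ 0)
    (hvG : ∀ g ∈ G, inner ℂ g v = 0) :
    ∃ f h : H, LinearIndependent ℂ ![f, h] ∧ PhaseRelated G Θ f h ∧ ∀ θ ∈ Θ, f ≠ θ • h := by
  obtain ⟨e, hve⟩ := exists_linearIndependent_pair_of_one_lt_rank hdim hv
  refine ⟨v + θ₀ • e, e, LinearIndependent.pair_add_smul_left_iff θ₀ |>.mpr hve,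
    fun g hg => ⟨θ₀, hθ₀, by rw [inner_add_right, inner_smul_right, hvG g hg, zero_add]⟩,
    fun θ _ hθ => ?_⟩
  have hrel : (1 : ℂ) • v + (θ₀ - θ) • e = 0 := by
    rw [sub_smul, ← hθ]
    module
  exact one_ne_zero (LinearIndependent.pair_iff.mp hve _ _ hrel).1

end PhaseRetrieval

theorem stmt13_general {H : Type*} [NormedAddCommGroup H] [InnerProductSpace ℂ H]
    (hdim : 2 ≤ Module.rank ℂ H)
    (G : Set H) (Θ : Set ℂ) (hne : Θ.Nonempty) :
    ¬ DoesPR G Θ ↔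
      ∃ f h : H, LinearIndependent ℂ ![f, h] ∧
        (∀ g ∈ G, ∃ θ ∈ Θ, (inner ℂ g f : ℂ) = θ * (inner ℂ g h : ℂ)) ∧
        (∀ θ ∈ Θ, f ≠ θ • h) := by
  rw [not_doesPR_iff]
  refine ⟨fun ⟨f, h, hfh, hfθh⟩ => ?_, fun ⟨f, h, _, hfh, hfθh⟩ => ⟨f, h, hfh, hfθh⟩⟩
  by_cases hind : LinearIndependent ℂ ![f, h]
  · exact ⟨f, h, hind, hfh, hfθh⟩
  obtain ⟨v, hv, hvG⟩ :=
    exists_ne_zero_orthogonal_of_not_linearIndependent hne hfh hfθh hind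
  obtain ⟨θ₀, hθ₀⟩ := hne
  exact exists_linearIndependent_phaseRelated_of_orthogonal
    (Cardinal.one_lt_two.trans_le hdim) hθ₀ hv hvG

theorem stmt13 {H : Type*} [NormedAddCommGroup H] [InnerProductSpace ℂ H] [CompleteSpace H]
    (hdim : 2 ≤ Module.rank ℂ H)
    (G : Set H) (hG : G.Nonempty) (Θ : Set ℂ) (hΘ : Θ ⊆ unitCircle) (hne : Θ.Nonempty) :
    ¬ DoesPR G Θ ↔
      ∃ f h : H, LinearIndependent ℂ ![f, h] ∧
        (∀ g ∈ G, ∃ θ ∈ Θ, (inner ℂ g f : ℂ) = θ * (inner ℂ g h : ℂ)) ∧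
        (∀ θ ∈ Θ, f ≠ θ • h) :=
  stmt13_general hdim G Θ hne
end
end

section
/- Let H be a complex Hilbert space and let {g_j}_{j∈ℕ} ⊆ H be an overcomplete sequence, i.e., for every infinite subset I ⊆ ℕ the set {g_j : j ∈ I} is complete in H. Then the set G = {g_j : j ∈ ℕ} does Θ-PR in H for every finite nonempty Θ ⊆ 𝕋. -/
open MeasureTheory Set

noncomputable section

/-! Only finitely many phases are available for the infinitely many `g_j`, so by pigeonhole a
single phase `θ₀` occurs for infinitely many `g_j`. These are complete, and `f - θ₀ h` is
orthogonal to all of them, hence `f = θ₀ h`. -/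

open scoped InnerProductSpace

theorem Set.Finite.exists_infinite_fiber {ι α : Type*} [Infinite ι] {Θ : Set α} (hΘ : Θ.Finite)
    {θ : ι → α} (hθ : ∀ i, θ i ∈ Θ) : ∃ a ∈ Θ, {i | θ i = a}.Infinite := by
  have := hΘ.to_subtype
  obtain ⟨⟨a, ha⟩, hfiber⟩ := _root_.Finite.exists_infinite_fiber fun i => (⟨θ i, hθ i⟩ : Θ)
  refine ⟨a, ha, Set.infinite_coe_iff.1 ?_⟩
  simpa only [Set.preimage, Set.mem_singleton_iff, Subtype.mk.injEq] using hfiber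

theorem IsCompleteSystem.eq_of_forall_inner_eq {H : Type*} [NormedAddCommGroup H]
    [InnerProductSpace ℂ H] {S : Set H} (hS : IsCompleteSystem S) {x y : H}
    (hxy : ∀ s ∈ S, ⟪s, x⟫_ℂ = ⟪s, y⟫_ℂ) : x = y := by
  have hortho : Submodule.span ℂ S ⟂ ℂ ∙ (x - y) :=
    Submodule.isOrtho_span.2 fun s hs v hv => by
      rw [Set.mem_singleton_iff.1 hv, inner_sub_right, hxy s hs, sub_self]
  have hmem : x - y ∈ (Submodule.span ℂ S)ᗮ := hortho.symm (Submodule.mem_span_singleton_self _)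
  rw [← Submodule.orthogonal_closure, hS, Submodule.top_orthogonal_eq_bot,
    Submodule.mem_bot] at hmem
  exact sub_eq_zero.1 hmem

theorem stmt14_general {H : Type*} [NormedAddCommGroup H] [InnerProductSpace ℂ H]
    (g : ℕ → H)
    (hover : ∀ I : Set ℕ, I.Infinite → IsCompleteSystem (g '' I))
    (Θ : Set ℂ) (hfin : Θ.Finite) :
    DoesPR (Set.range g) Θ := by
  intro f h hphase
  choose θ hθΘ hθ using fun n => hphase (g n) ⟨n, rfl⟩
  obtain ⟨θ₀, hθ₀Θ, hfiber⟩ := hfin.exists_infinite_fiber hθΘ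
  refine ⟨θ₀, hθ₀Θ, (hover _ hfiber).eq_of_forall_inner_eq ?_⟩
  rintro _ ⟨n, hn : θ n = θ₀, rfl⟩
  rw [hθ n, hn, inner_smul_right]

theorem stmt14 {H : Type*} [NormedAddCommGroup H] [InnerProductSpace ℂ H] [CompleteSpace H]
    (g : ℕ → H)
    (hover : ∀ I : Set ℕ, I.Infinite → IsCompleteSystem (g '' I))
    (Θ : Set ℂ) (hΘ : Θ ⊆ unitCircle) (hfin : Θ.Finite) (hne : Θ.Nonempty) :
    DoesPR (Set.range g) Θ :=
  stmt14_general g hover Θ hfin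
end
end

section
/- Let H be a complex Hilbert space and let G ⊆ H be nonempty. Let Θ = {θ_1, θ_2, θ_3, θ_4} ⊆ 𝕋 and Θ' = {θ_1', θ_2', θ_3', θ_4'} ⊆ 𝕋 each consist of four pairwise distinct elements, and suppose CR(θ_1, θ_2; θ_3, θ_4) = CR(θ_1', θ_2'; θ_3', θ_4'). Then G does Θ-PR in H if and only if G does Θ'-PR in H. -/
open MeasureTheory Set

noncomputable section

/-- The cross ratio of four complex numbers. -/
def crossRatio (z₁ z₂ z₃ z₄ : ℂ) : ℂ :=
  ((z₁ - z₃) * (z₂ - z₄)) / ((z₁ - z₄) * (z₂ - z₃))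

/-!
Proof idea: if the Möbius map `μ z = (a z + b) / (c z + d)` carries `Θ` onto `Θ'`, then
`⟨f, g⟩ = θ ⟨h, g⟩` for all `g ∈ G` gives `⟨a f + b h, g⟩ = μ θ ⟨c f + d h, g⟩`, so `Θ'`-PR
yields `a f + b h = θ' (c f + d h)` and solving for `f` gives `f = μ⁻¹ θ' • h`. Four distinct
points can be carried onto four distinct points by a Möbius map exactly when their cross ratios
agree.
-/

/-- The Möbius map of `(a b; c d)` carries `Θ` onto `Θ'`; `a z + b = w (c z + d)` is the
homogeneous form of `w = (a z + b) / (c z + d)`. -/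
def MobiusMapsOnto (a b c d : ℂ) (Θ Θ' : Set ℂ) : Prop :=
  (∀ z ∈ Θ, ∃ w ∈ Θ', a * z + b = w * (c * z + d)) ∧
    ∀ w ∈ Θ', ∃ z ∈ Θ, a * z + b = w * (c * z + d)

namespace MobiusMapsOnto

variable {a b c d z w : ℂ} {Θ Θ' : Set ℂ}

lemma singleton (h : a * z + b = w * (c * z + d)) : MobiusMapsOnto a b c d {z} {w} :=
  ⟨fun _ hz => ⟨w, rfl, hz ▸ h⟩, fun _ hw => ⟨z, rfl, hw ▸ h⟩⟩

lemma insert (h : a * z + b = w * (c * z + d)) (hΘ : MobiusMapsOnto a b c d Θ Θ') :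
    MobiusMapsOnto a b c d (insert z Θ) (insert w Θ') := by
  refine ⟨?_, ?_⟩
  · rintro z' (rfl | hz')
    · exact ⟨w, mem_insert _ _, h⟩
    · obtain ⟨w', hw', h'⟩ := hΘ.1 z' hz'
      exact ⟨w', mem_insert_of_mem _ hw', h'⟩
  · rintro w' (rfl | hw')
    · exact ⟨z, mem_insert _ _, h⟩
    · obtain ⟨z', hz', h'⟩ := hΘ.2 w' hw'
      exact ⟨z', mem_insert_of_mem _ hz', h'⟩

lemma symm (h : MobiusMapsOnto a b c d Θ Θ') : MobiusMapsOnto d (-b) (-c) a Θ' Θ :=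
  ⟨fun w hw => (h.2 w hw).imp fun _ ⟨hz, e⟩ => ⟨hz, by linear_combination -e⟩,
    fun z hz => (h.1 z hz).imp fun _ ⟨hw, e⟩ => ⟨hw, by linear_combination -e⟩⟩

end MobiusMapsOnto

lemma DoesPR.of_mobiusMapsOnto {H : Type*} [NormedAddCommGroup H] [InnerProductSpace ℂ H]
    {G : Set H} {a b c d : ℂ} {Θ Θ' : Set ℂ} (hdet : a * d - b * c ≠ 0)
    (hμ : MobiusMapsOnto a b c d Θ Θ') (hPR : DoesPR G Θ') : DoesPR G Θ := by
  intro f h hfh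
  have hG : ∀ g ∈ G, ∃ w ∈ Θ',
      inner ℂ g (a • f + b • h) = w * inner ℂ g (c • f + d • h) := by
    intro g hg
    obtain ⟨z, hz, hfg⟩ := hfh g hg
    obtain ⟨w, hw, hzw⟩ := hμ.1 z hz
    refine ⟨w, hw, ?_⟩
    simp only [inner_add_right, inner_smul_right, hfg]
    linear_combination inner ℂ g h * hzw
  obtain ⟨w, hw, hfh'⟩ := hPR _ _ hG
  obtain ⟨z, hz, hzw⟩ := hμ.2 w hw
  refine ⟨z, hz, ?_⟩
  -- `a - w c = 0` would force `w d - b = 0` too, making `(w, 1)` a left null vector of `(a b; c d)`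
  have hne : a - w * c ≠ 0 := by
    intro h0
    have hb : w * d - b = 0 := by linear_combination z * h0 - hzw
    exact hdet (by linear_combination d * h0 + c * hb)
  have hsolve : (a - w * c) • f = (a - w * c) • (z • h) := by
    rw [smul_smul]
    linear_combination (norm := module) hfh' - hzw • h
  exact smul_right_injective H hne hsolve

lemma doesPR_iff_of_mobiusMapsOnto {H : Type*} [NormedAddCommGroup H] [InnerProductSpace ℂ H]
    (G : Set H) {a b c d : ℂ} {Θ Θ' : Set ℂ} (hdet : a * d - b * c ≠ 0)
    (hμ : MobiusMapsOnto a b c d Θ Θ') : DoesPR G Θ ↔ DoesPR G Θ' :=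
  ⟨.of_mobiusMapsOnto (a := d) (b := -b) (c := -c) (d := a)
      (fun h0 => hdet (by linear_combination h0)) hμ.symm,
    .of_mobiusMapsOnto hdet hμ⟩

/-- The Möbius map `z ↦ w` defined by `CR(z, z₂; z₃, z₄) = CR(w, w₂; w₃, w₄)`, with the
cross-ratio equation cleared of denominators. -/
lemma exists_mobius_crossRatio {z₂ z₃ z₄ w₂ w₃ w₄ : ℂ} (hz₂₃ : z₂ ≠ z₃) (hz₂₄ : z₂ ≠ z₄)
    (hz₃₄ : z₃ ≠ z₄) (hw₂₃ : w₂ ≠ w₃) (hw₂₄ : w₂ ≠ w₄) (hw₃₄ : w₃ ≠ w₄) :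
    ∃ a b c d : ℂ, a * d - b * c ≠ 0 ∧ ∀ z w : ℂ, a * z + b - w * (c * z + d) =
      (z - z₃) * (z₂ - z₄) * ((w - w₄) * (w₂ - w₃)) -
        (w - w₃) * (w₂ - w₄) * ((z - z₄) * (z₂ - z₃)) := by
  -- `(p q; r s)` sends `z` to `CR(z, z₂; z₃, z₄)`; compose with the adjugate of its primed version
  set p := z₂ - z₄; set q := -z₃ * (z₂ - z₄); set r := z₂ - z₃; set s := -z₄ * (z₂ - z₃)
  set p' := w₂ - w₄; set q' := -w₃ * (w₂ - w₄); set r' := w₂ - w₃; set s' := -w₄ * (w₂ - w₃)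
  refine ⟨s' * p - q' * r, s' * q - q' * s, p' * r - r' * p, p' * s - r' * q, ?_,
    fun z w => by ring⟩
  have hdet : (s' * p - q' * r) * (p' * s - r' * q) - (s' * q - q' * s) * (p' * r - r' * p) =
      (z₂ - z₄) * (z₂ - z₃) * (z₃ - z₄) * ((w₂ - w₄) * (w₂ - w₃) * (w₃ - w₄)) := by ring
  rw [hdet]
  simp [sub_eq_zero, *]

theorem stmt16_general {H : Type*} [NormedAddCommGroup H] [InnerProductSpace ℂ H]
    (G : Set H)
    (θ₁ θ₂ θ₃ θ₄ θ₁' θ₂' θ₃' θ₄' : ℂ)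
    (hdist : θ₁ ≠ θ₂ ∧ θ₁ ≠ θ₃ ∧ θ₁ ≠ θ₄ ∧ θ₂ ≠ θ₃ ∧ θ₂ ≠ θ₄ ∧ θ₃ ≠ θ₄)
    (hdist' : θ₁' ≠ θ₂' ∧ θ₁' ≠ θ₃' ∧ θ₁' ≠ θ₄' ∧ θ₂' ≠ θ₃' ∧ θ₂' ≠ θ₄' ∧ θ₃' ≠ θ₄')
    (hCR : crossRatio θ₁ θ₂ θ₃ θ₄ = crossRatio θ₁' θ₂' θ₃' θ₄') :
    DoesPR G ({θ₁, θ₂, θ₃, θ₄} : Set ℂ) ↔ DoesPR G ({θ₁', θ₂', θ₃', θ₄'} : Set ℂ) := by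
  obtain ⟨-, -, h14, h23, h24, h34⟩ := hdist
  obtain ⟨-, -, h14', h23', h24', h34'⟩ := hdist'
  have hcr := (div_eq_div_iff (mul_ne_zero (sub_ne_zero.2 h14) (sub_ne_zero.2 h23))
    (mul_ne_zero (sub_ne_zero.2 h14') (sub_ne_zero.2 h23'))).1 hCR
  obtain ⟨a, b, c, d, hdet, hμ⟩ := exists_mobius_crossRatio h23 h24 h34 h23' h24' h34'
  have hmaps : ∀ {z w : ℂ}, (z - θ₃) * (θ₂ - θ₄) * ((w - θ₄') * (θ₂' - θ₃')) =
      (w - θ₃') * (θ₂' - θ₄') * ((z - θ₄) * (θ₂ - θ₃)) → a * z + b = w * (c * z + d) :=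
    fun {z w} h => sub_eq_zero.1 ((hμ z w).trans (sub_eq_zero.2 h))
  refine doesPR_iff_of_mobiusMapsOnto G hdet
    (((((MobiusMapsOnto.singleton (hmaps ?_)).insert (hmaps ?_)).insert (hmaps ?_)).insert
      (hmaps hcr))) <;> ring

theorem stmt16 {H : Type*} [NormedAddCommGroup H] [InnerProductSpace ℂ H] [CompleteSpace H]
    (G : Set H) (hG : G.Nonempty)
    (θ₁ θ₂ θ₃ θ₄ θ₁' θ₂' θ₃' θ₄' : ℂ)
    (hθ : ∀ z ∈ ({θ₁, θ₂, θ₃, θ₄} : Set ℂ), z ∈ unitCircle)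
    (hθ' : ∀ z ∈ ({θ₁', θ₂', θ₃', θ₄'} : Set ℂ), z ∈ unitCircle)
    (hdist : θ₁ ≠ θ₂ ∧ θ₁ ≠ θ₃ ∧ θ₁ ≠ θ₄ ∧ θ₂ ≠ θ₃ ∧ θ₂ ≠ θ₄ ∧ θ₃ ≠ θ₄)
    (hdist' : θ₁' ≠ θ₂' ∧ θ₁' ≠ θ₃' ∧ θ₁' ≠ θ₄' ∧ θ₂' ≠ θ₃' ∧ θ₂' ≠ θ₄' ∧ θ₃' ≠ θ₄')
    (hCR : crossRatio θ₁ θ₂ θ₃ θ₄ = crossRatio θ₁' θ₂' θ₃' θ₄') :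
    DoesPR G ({θ₁, θ₂, θ₃, θ₄} : Set ℂ) ↔ DoesPR G ({θ₁', θ₂', θ₃', θ₄'} : Set ℂ) :=
  stmt16_general G θ₁ θ₂ θ₃ θ₄ θ₁' θ₂' θ₃' θ₄' hdist hdist' hCR
end
end
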